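/- arXiv:2311.05926 — 5 statements merged into one kernel-verified Lean document; each statement's English description precedes it below -/
import Mathlib

section
/- Let T > 0 and let D ⊂ ℝ^d (d ≥ 1) be a bounded open set, D̄ its closure, ∂D its boundary. Let d' > 0 be a constant. Let w : [0,T] × D̄ → ℝ be continuous, and assume that on (0,T] × D the time derivative ∂w/∂t exists and is continuous and w(t,·) is twice continuously differentiable in x. Let c₁, c₂, c₃, c₄ : (0,T] × D → ℝ be bounded measurable functions with c₂ ≥ 0, c₃ ≥ 0, c₄ ≥ 0. Assume: (i) for all (t,x) ∈ (0,T] × D, ∂w/∂t(t,x) − d'·Δw(t,x) ≥ c₁(t,x)·w(t,x) + c₃(t,x)·∫_D c₂(t,y)·w(t,y) dy + ∫_D c₄(t,y)·w(t,y) dy; (ii) w(t,x) ≥ 0 for all t ∈ [0,T] and x ∈ ∂D; and (iii) w(0,x) ≥ 0 for all x ∈ D. Then w(t,x) ≥ 0 for all (t,x) ∈ [0,T] × D̄. -/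
open MeasureTheory Real Set

lemma left_deriv_nonpos_of_min {g : ℝ → ℝ} {t₀ T G : ℝ} (h0 : 0 < t₀) (hle : t₀ ≤ T)
    (hg : HasDerivAt g G t₀) (hmin : ∀ s ∈ Icc (0:ℝ) T, g t₀ ≤ g s) : G ≤ 0 := by
  by_contra hc
  push_neg at hc
  have hslope := hasDerivAt_iff_tendsto_slope.1 hg
  have hne : (nhdsWithin t₀ (Ioo (0:ℝ) t₀)).NeBot := by
    rw [← mem_closure_iff_nhdsWithin_neBot, closure_Ioo (ne_of_lt h0)]
    exact ⟨le_of_lt h0, le_refl _⟩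
  have hmono : nhdsWithin t₀ (Ioo (0:ℝ) t₀) ≤ nhdsWithin t₀ {t₀}ᶜ :=
    nhdsWithin_mono _ (fun s hs => ne_of_lt hs.2)
  have hev : ∀ᶠ s in nhdsWithin t₀ (Ioo (0:ℝ) t₀), 0 < slope g t₀ s :=
    (hslope.mono_left hmono).eventually (eventually_gt_nhds hc)
  obtain ⟨s, hs0, hsI⟩ := (hev.and eventually_mem_nhdsWithin).exists
  rw [slope_def_field] at hs0
  have hlt : s - t₀ < 0 := sub_neg.2 hsI.2
  have hnum : g s - g t₀ < 0 := by
    rcases div_pos_iff.1 hs0 with ⟨h1, h2⟩ | ⟨h1, h2⟩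
    · linarith
    · exact h1
  have := hmin s ⟨hsI.1.le, hsI.2.le.trans hle⟩
  linarith

lemma second_deriv_nonneg_of_min {φ ψ : ℝ → ℝ} {q δ : ℝ} (hδ : 0 < δ)
    (hφ : ∀ s ∈ Ioo (-δ) δ, HasDerivAt φ (ψ s) s) (hψ : HasDerivAt ψ q 0)
    (hmin : ∀ s ∈ Ioo (-δ) δ, φ 0 ≤ φ s) : 0 ≤ q := by
  by_contra hq
  push_neg at hq
  have h0mem : (0:ℝ) ∈ Ioo (-δ) δ := ⟨by linarith, hδ⟩
  have hψ0 : ψ 0 = 0 := by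
    have hloc : IsLocalMin φ 0 :=
      Filter.eventually_of_mem (Ioo_mem_nhds (by linarith) hδ) hmin
    exact hloc.hasDerivAt_eq_zero (hφ 0 h0mem)
  have hslope := hasDerivAt_iff_tendsto_slope.1 hψ
  have hev : ∀ᶠ s in nhdsWithin (0:ℝ) {(0:ℝ)}ᶜ, slope ψ 0 s < q/2 :=
    hslope.eventually (eventually_lt_nhds (by linarith))
  rw [eventually_nhdsWithin_iff, Metric.eventually_nhds_iff] at hev
  obtain ⟨ε, hε, hev⟩ := hev
  have hψneg : ∀ s : ℝ, 0 < s → s < ε → ψ s < 0 := by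
    intro s hs1 hs2
    have h := hev (show dist s 0 < ε by rw [Real.dist_eq, sub_zero, abs_of_pos hs1]; exact hs2)
      (by simp [ne_of_gt hs1])
    rw [slope_def_field, hψ0, sub_zero, sub_zero] at h
    have h2 : ψ s < q/2 * s := (div_lt_iff₀ hs1).1 h
    nlinarith
  set b := min ε δ / 2 with hb
  have hb0 : 0 < b := by positivity
  have hbδ : b < δ := by
    have h1 : min ε δ ≤ δ := min_le_right _ _
    rw [hb]; linarith
  have hbε : b < ε := by
    have h1 : min ε δ ≤ ε := min_le_left _ _
    rw [hb]; linarith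
  have hsub : Icc (0:ℝ) b ⊆ Ioo (-δ) δ := fun s hs =>
    ⟨by linarith [hs.1], lt_of_le_of_lt hs.2 hbδ⟩
  have hcont : ContinuousOn φ (Icc 0 b) := fun s hs =>
    ((hφ s (hsub hs)).continuousAt).continuousWithinAt
  obtain ⟨c, hcI, hceq⟩ := exists_hasDerivAt_eq_slope φ ψ hb0 hcont
    (fun s hs => hφ s (hsub ⟨hs.1.le, hs.2.le⟩))
  have hψc : ψ c < 0 := hψneg c hcI.1 (lt_trans hcI.2 hbε)
  rw [hceq, sub_zero] at hψc
  have hφb : φ b < φ 0 := by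
    rcases div_neg_iff.1 hψc with ⟨h1, h2⟩ | ⟨h1, h2⟩
    · linarith
    · linarith
  exact absurd (hmin b (hsub ⟨hb0.le, le_refl b⟩)) (not_le.2 hφb)

lemma slice_aesm {d : ℕ} {T : ℝ} {D : Set (EuclideanSpace ℝ (Fin d))} (hD : MeasurableSet D)
    {c : ℝ → EuclideanSpace ℝ (Fin d) → ℝ}
    (hc : Measurable ((Ioc (0:ℝ) T ×ˢ D).restrict
      fun p : ℝ × EuclideanSpace ℝ (Fin d) => c p.1 p.2))
    {t₀ : ℝ} (ht₀ : t₀ ∈ Ioc (0:ℝ) T) :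
    AEStronglyMeasurable (c t₀) (volume.restrict D) := by
  have hj : Measurable fun y : D =>
      (⟨(t₀, (y : EuclideanSpace ℝ (Fin d))), ⟨ht₀, y.2⟩⟩ : ↥(Ioc (0:ℝ) T ×ˢ D)) :=
    (measurable_const.prodMk measurable_subtype_coe).subtype_mk
  have hm : Measurable fun y : D => c t₀ (y : EuclideanSpace ℝ (Fin d)) := hc.comp hj
  rw [← map_comap_subtype_coe hD]
  exact ((MeasurableEmbedding.subtype_coe hD).aestronglyMeasurable_map_iff).2
    hm.stronglyMeasurable.aestronglyMeasurable

/-- The Laplacian in the spatial variable: `Δf(x) = ∑ i, ∂²f(x)/∂xᵢ²`. -/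
noncomputable def laplacian {d : ℕ} (f : EuclideanSpace ℝ (Fin d) → ℝ)
    (x : EuclideanSpace ℝ (Fin d)) : ℝ :=
  ∑ i, fderiv ℝ (fun y => fderiv ℝ f y (EuclideanSpace.single i 1)) x (EuclideanSpace.single i 1)

/-- Non-local parabolic comparison principle (Lemma 3.2, nonnegativity part). -/
theorem statement0 {d : ℕ} (hd : 1 ≤ d) {T : ℝ} (hT : 0 < T)
    {D : Set (EuclideanSpace ℝ (Fin d))} (hDopen : IsOpen D)
    (hDbdd : Bornology.IsBounded D)
    {d' : ℝ} (hd' : 0 < d')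
    (w wt : ℝ → EuclideanSpace ℝ (Fin d) → ℝ)
    -- `w` is continuous on `[0,T] × D̄`
    (hw_cont : ContinuousOn (fun p : ℝ × EuclideanSpace ℝ (Fin d) => w p.1 p.2)
      (Icc 0 T ×ˢ closure D))
    -- the time derivative `∂w/∂t = wt` exists on `(0,T] × D` and is continuous there
    (hw_t : ∀ t ∈ Ioc 0 T, ∀ x ∈ D, HasDerivAt (fun s => w s x) (wt t x) t)
    (hwt_cont : ContinuousOn (fun p : ℝ × EuclideanSpace ℝ (Fin d) => wt p.1 p.2)
      (Ioc 0 T ×ˢ D))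
    -- `w(t, ·)` is twice continuously differentiable in `x` on `D`
    (hw_x : ∀ t ∈ Ioc 0 T, ContDiffOn ℝ 2 (w t) D)
    (c₁ c₂ c₃ c₄ : ℝ → EuclideanSpace ℝ (Fin d) → ℝ)
    -- the coefficients are measurable on `(0,T] × D`
    (hc₁meas : Measurable ((Ioc 0 T ×ˢ D).restrict
      fun p : ℝ × EuclideanSpace ℝ (Fin d) => c₁ p.1 p.2))
    (hc₂meas : Measurable ((Ioc 0 T ×ˢ D).restrict
      fun p : ℝ × EuclideanSpace ℝ (Fin d) => c₂ p.1 p.2))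
    (hc₃meas : Measurable ((Ioc 0 T ×ˢ D).restrict
      fun p : ℝ × EuclideanSpace ℝ (Fin d) => c₃ p.1 p.2))
    (hc₄meas : Measurable ((Ioc 0 T ×ˢ D).restrict
      fun p : ℝ × EuclideanSpace ℝ (Fin d) => c₄ p.1 p.2))
    -- the coefficients are bounded on `(0,T] × D`
    (hc₁bdd : ∃ M, ∀ t ∈ Ioc 0 T, ∀ x ∈ D, |c₁ t x| ≤ M)
    (hc₂bdd : ∃ M, ∀ t ∈ Ioc 0 T, ∀ x ∈ D, |c₂ t x| ≤ M)
    (hc₃bdd : ∃ M, ∀ t ∈ Ioc 0 T, ∀ x ∈ D, |c₃ t x| ≤ M)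
    (hc₄bdd : ∃ M, ∀ t ∈ Ioc 0 T, ∀ x ∈ D, |c₄ t x| ≤ M)
    -- `c₂, c₃, c₄ ≥ 0`
    (hc₂nn : ∀ t ∈ Ioc 0 T, ∀ x ∈ D, 0 ≤ c₂ t x)
    (hc₃nn : ∀ t ∈ Ioc 0 T, ∀ x ∈ D, 0 ≤ c₃ t x)
    (hc₄nn : ∀ t ∈ Ioc 0 T, ∀ x ∈ D, 0 ≤ c₄ t x)
    -- (i) the differential inequality
    (hineq : ∀ t ∈ Ioc 0 T, ∀ x ∈ D,
      c₁ t x * w t x + c₃ t x * (∫ y in D, c₂ t y * w t y)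
        + (∫ y in D, c₄ t y * w t y) ≤ wt t x - d' * laplacian (w t) x)
    -- (ii) boundary nonnegativity
    (hbdry : ∀ t ∈ Icc 0 T, ∀ x ∈ frontier D, 0 ≤ w t x)
    -- (iii) initial nonnegativity
    (hinit : ∀ x ∈ D, 0 ≤ w 0 x) :
    ∀ t ∈ Icc 0 T, ∀ x ∈ closure D, 0 ≤ w t x := by
  intro t ht x hx
  classical
  have hDmeas : MeasurableSet D := hDopen.measurableSet
  have hKcomp : IsCompact (closure D) :=
    Metric.isCompact_of_isClosed_isBounded isClosed_closure hDbdd.closure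
  have hDfin : volume D < ⊤ := hDbdd.measure_lt_top
  obtain ⟨M₁, hM₁⟩ := hc₁bdd
  obtain ⟨M₂, hM₂⟩ := hc₂bdd
  obtain ⟨M₃, hM₃⟩ := hc₃bdd
  obtain ⟨M₄, hM₄⟩ := hc₄bdd
  set M : ℝ := max 0 (max (max M₁ M₂) (max M₃ M₄)) with hMdef
  have hM0 : 0 ≤ M := le_max_left 0 _
  have hMc₁ : ∀ t' ∈ Ioc 0 T, ∀ y ∈ D, |c₁ t' y| ≤ M := fun t' ht' y hy =>
    (hM₁ t' ht' y hy).trans ((le_max_left M₁ M₂).trans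
      ((le_max_left _ _).trans (le_max_right 0 _)))
  have hMc₂ : ∀ t' ∈ Ioc 0 T, ∀ y ∈ D, |c₂ t' y| ≤ M := fun t' ht' y hy =>
    (hM₂ t' ht' y hy).trans ((le_max_right M₁ M₂).trans
      ((le_max_left _ _).trans (le_max_right 0 _)))
  have hMc₃ : ∀ t' ∈ Ioc 0 T, ∀ y ∈ D, |c₃ t' y| ≤ M := fun t' ht' y hy =>
    (hM₃ t' ht' y hy).trans ((le_max_left M₃ M₄).trans
      ((le_max_right _ _).trans (le_max_right 0 _)))
  have hMc₄ : ∀ t' ∈ Ioc 0 T, ∀ y ∈ D, |c₄ t' y| ≤ M := fun t' ht' y hy =>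
    (hM₄ t' ht' y hy).trans ((le_max_right M₃ M₄).trans
      ((le_max_right _ _).trans (le_max_right 0 _)))
  set V : ℝ := (volume D).toReal with hVdef
  have hV0 : 0 ≤ V := ENNReal.toReal_nonneg
  set L : ℝ := M + M * M * V + M * V + 1 with hLdef
  set u : ℝ × EuclideanSpace ℝ (Fin d) → ℝ := fun p => exp (-L * p.1) * w p.1 p.2 with hudef
  have hu_cont : ContinuousOn u (Icc 0 T ×ˢ closure D) := by
    rw [hudef]
    exact ((Real.continuous_exp.comp (continuous_const.mul continuous_fst)).continuousOn).mul
      hw_cont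
  have hScomp : IsCompact (Icc (0:ℝ) T ×ˢ closure D) := isCompact_Icc.prod hKcomp
  have hSne : (Icc (0:ℝ) T ×ˢ closure D).Nonempty := ⟨(t, x), Set.mk_mem_prod ht hx⟩
  obtain ⟨⟨t₀, x₀⟩, hp₀S, hp₀min⟩ := hScomp.exists_isMinOn hSne hu_cont
  have hp₀min' : ∀ s' ∈ Icc 0 T, ∀ y ∈ closure D,
      exp (-L * t₀) * w t₀ x₀ ≤ exp (-L * s') * w s' y := by
    intro s' hs' y hy
    have h := hp₀min (Set.mk_mem_prod hs' hy)
    simpa only [hudef, Set.mem_setOf_eq] using h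
  suffices hm : 0 ≤ exp (-L * t₀) * w t₀ x₀ by
    have h1 := hp₀min' t ht x hx
    have h2 : 0 ≤ exp (-L * t) * w t x := hm.trans h1
    nlinarith [exp_pos (-L * t)]
  by_contra hm
  push_neg at hm
  have ht₀ : t₀ ∈ Icc 0 T := hp₀S.1
  have hx₀K : x₀ ∈ closure D := hp₀S.2
  have hW : w t₀ x₀ < 0 := by
    by_contra h
    push_neg at h
    have : 0 ≤ exp (-L * t₀) * w t₀ x₀ := mul_nonneg (exp_pos _).le h
    exact absurd this (not_le.2 hm)
  have hx₀D : x₀ ∈ D := by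
    by_contra h
    have hfr : x₀ ∈ frontier D := ⟨hx₀K, by rwa [hDopen.interior_eq]⟩
    exact absurd (hbdry t₀ ht₀ x₀ hfr) (not_le.2 hW)
  have ht₀0 : 0 < t₀ := by
    rcases ht₀.1.lt_or_eq with h | h
    · exact h
    · exfalso
      rw [← h] at hW
      exact absurd (hinit x₀ hx₀D) (not_le.2 hW)
  have ht₀Ioc : t₀ ∈ Ioc 0 T := ⟨ht₀0, ht₀.2⟩
  have hminx : ∀ y ∈ closure D, w t₀ x₀ ≤ w t₀ y := by
    intro y hy
    have h1 := hp₀min' t₀ ht₀ y hy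
    exact (mul_le_mul_iff_right₀ (exp_pos (-L * t₀))).1 h1
  have hwcont : ContinuousOn (w t₀) (closure D) :=
    hw_cont.comp ((continuous_const.prodMk continuous_id).continuousOn)
      (fun y hy => Set.mk_mem_prod ht₀ hy)
  obtain ⟨B, hB⟩ := hKcomp.exists_bound_of_continuousOn hwcont
  have hwSM : AEStronglyMeasurable (w t₀) (volume.restrict D) :=
    (hwcont.mono subset_closure).aestronglyMeasurable hDmeas
  have hint : ∀ c : ℝ → EuclideanSpace ℝ (Fin d) → ℝ,
      Measurable ((Ioc (0:ℝ) T ×ˢ D).restrict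
        fun p : ℝ × EuclideanSpace ℝ (Fin d) => c p.1 p.2) →
      (∀ t' ∈ Ioc 0 T, ∀ y ∈ D, |c t' y| ≤ M) →
      IntegrableOn (fun y => c t₀ y * w t₀ y) D := by
    intro c hcmeas hcbd
    have hsm : AEStronglyMeasurable (fun y => c t₀ y * w t₀ y) (volume.restrict D) :=
      (slice_aesm hDmeas hcmeas ht₀Ioc).mul hwSM
    refine Integrable.mono' (g := fun _ => M * B) (integrableOn_const hDfin.ne) hsm ?_
    rw [ae_restrict_iff' hDmeas]
    refine Filter.Eventually.of_forall fun y hy => ?_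
    have h1 := hcbd t₀ ht₀Ioc y hy
    have h2 := hB y (subset_closure hy)
    rw [Real.norm_eq_abs, abs_mul]
    exact mul_le_mul h1 (by rwa [Real.norm_eq_abs] at h2) (abs_nonneg _) hM0
  have hlow : ∀ c : ℝ → EuclideanSpace ℝ (Fin d) → ℝ,
      Measurable ((Ioc (0:ℝ) T ×ˢ D).restrict
        fun p : ℝ × EuclideanSpace ℝ (Fin d) => c p.1 p.2) →
      (∀ t' ∈ Ioc 0 T, ∀ y ∈ D, |c t' y| ≤ M) →
      (∀ t' ∈ Ioc 0 T, ∀ y ∈ D, 0 ≤ c t' y) →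
      M * w t₀ x₀ * V ≤ ∫ y in D, c t₀ y * w t₀ y := by
    intro c hcmeas hcbd hcnn
    have hintc := hint c hcmeas hcbd
    have hconst : IntegrableOn (fun _ : EuclideanSpace ℝ (Fin d) => M * w t₀ x₀) D :=
      integrableOn_const hDfin.ne
    have hpt : ∀ y ∈ D, M * w t₀ x₀ ≤ c t₀ y * w t₀ y := by
      intro y hy
      have h1 : w t₀ x₀ ≤ w t₀ y := hminx y (subset_closure hy)
      have h2 : 0 ≤ c t₀ y := hcnn t₀ ht₀Ioc y hy
      have h3 : c t₀ y ≤ M := (abs_le.1 (hcbd t₀ ht₀Ioc y hy)).2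
      have h4 : c t₀ y * w t₀ x₀ ≤ c t₀ y * w t₀ y := mul_le_mul_of_nonneg_left h1 h2
      have h5 : M * w t₀ x₀ ≤ c t₀ y * w t₀ x₀ := mul_le_mul_of_nonpos_right h3 hW.le
      linarith
    calc M * w t₀ x₀ * V = ∫ _y in D, M * w t₀ x₀ := by
          rw [setIntegral_const, smul_eq_mul, hVdef, measureReal_def]; ring
      _ ≤ ∫ y in D, c t₀ y * w t₀ y := setIntegral_mono_on hconst hintc hDmeas hpt
  -- time derivative at the minimum
  have hgd : HasDerivAt (fun s => exp (-L * s) * w s x₀)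
      (exp (-L * t₀) * (wt t₀ x₀ - L * w t₀ x₀)) t₀ := by
    have h1 : HasDerivAt (fun s : ℝ => exp (-L * s)) (exp (-L * t₀) * -L) t₀ := by
      simpa using ((hasDerivAt_id t₀).const_mul (-L)).exp
    have h2 := hw_t t₀ ht₀Ioc x₀ hx₀D
    have h3 := h1.mul h2
    rw [show exp (-L * t₀) * (wt t₀ x₀ - L * w t₀ x₀) = exp (-L * t₀) * -L * w t₀ x₀ + exp (-L * t₀) * wt t₀ x₀ by ring]
    exact h3
  have hGle : exp (-L * t₀) * (wt t₀ x₀ - L * w t₀ x₀) ≤ 0 := by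
    refine left_deriv_nonpos_of_min ht₀0 ht₀.2 hgd ?_
    intro s hs
    exact hp₀min' s hs x₀ (subset_closure hx₀D)
  have hwt_le : wt t₀ x₀ ≤ L * w t₀ x₀ := by
    have he := exp_pos (-L * t₀)
    nlinarith
  -- the Laplacian is nonnegative at the spatial minimum
  have hΔ : 0 ≤ laplacian (w t₀) x₀ := by
    unfold laplacian
    refine Finset.sum_nonneg fun i _ => ?_
    set e : EuclideanSpace ℝ (Fin d) := EuclideanSpace.single i (1:ℝ) with hedef
    obtain ⟨δ, hδpos, hball⟩ := Metric.isOpen_iff.1 hDopen x₀ hx₀D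
    have hememD : ∀ s : ℝ, s ∈ Ioo (-δ) δ → x₀ + s • e ∈ D := by
      intro s hs
      apply hball
      rw [Metric.mem_ball, dist_eq_norm]
      have h0 : x₀ + s • e - x₀ = s • e := by abel
      rw [h0, norm_smul, hedef, EuclideanSpace.norm_single]
      simp only [norm_one, mul_one]
      exact abs_lt.2 ⟨hs.1, hs.2⟩
    have hf2 : ContDiffOn ℝ 2 (w t₀) D := hw_x t₀ ht₀Ioc
    have hfd : ∀ y ∈ D, DifferentiableAt ℝ (w t₀) y := fun y hy =>
      (hf2.differentiableOn (by norm_num)).differentiableAt (hDopen.mem_nhds hy)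
    have hline : ∀ s : ℝ, HasDerivAt (fun r : ℝ => x₀ + r • e) e s := by
      intro s
      simpa using ((hasDerivAt_id s).smul_const e).const_add x₀
    have hφ : ∀ s ∈ Ioo (-δ) δ,
        HasDerivAt (fun r : ℝ => w t₀ (x₀ + r • e)) (fderiv ℝ (w t₀) (x₀ + s • e) e) s := by
      intro s hs
      exact (hfd _ (hememD s hs)).hasFDerivAt.comp_hasDerivAt s (hline s)
    have hcd : ContDiffAt ℝ 2 (w t₀) x₀ := hf2.contDiffAt (hDopen.mem_nhds hx₀D)
    have h1 : ContDiffAt ℝ 1 (fderiv ℝ (w t₀)) x₀ := hcd.fderiv_right (by norm_num)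
    have h2 : DifferentiableAt ℝ (fderiv ℝ (w t₀)) x₀ := h1.differentiableAt (by norm_num)
    have h3 : HasFDerivAt (fun y => fderiv ℝ (w t₀) y e)
        ((ContinuousLinearMap.apply ℝ ℝ e).comp (fderiv ℝ (fderiv ℝ (w t₀)) x₀)) x₀ :=
      (ContinuousLinearMap.apply ℝ ℝ e).hasFDerivAt.comp x₀ h2.hasFDerivAt
    have hq : fderiv ℝ (fun y => fderiv ℝ (w t₀) y e) x₀ =
        (ContinuousLinearMap.apply ℝ ℝ e).comp (fderiv ℝ (fderiv ℝ (w t₀)) x₀) := h3.fderiv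
    have hψd : HasDerivAt (fun s : ℝ => fderiv ℝ (w t₀) (x₀ + s • e) e)
        (fderiv ℝ (fun y => fderiv ℝ (w t₀) y e) x₀ e) 0 := by
      rw [hq]
      have hpt : x₀ + (0:ℝ) • e = x₀ := by simp
      have h4 : HasFDerivAt (fun y => fderiv ℝ (w t₀) y e)
          ((ContinuousLinearMap.apply ℝ ℝ e).comp (fderiv ℝ (fderiv ℝ (w t₀)) x₀))
          (x₀ + (0:ℝ) • e) := by rw [hpt]; exact h3
      exact h4.comp_hasDerivAt 0 (hline 0)
    have hφmin : ∀ s ∈ Ioo (-δ) δ, w t₀ (x₀ + (0:ℝ) • e) ≤ w t₀ (x₀ + s • e) := by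
      intro s hs
      have h0 : x₀ + (0:ℝ) • e = x₀ := by simp
      rw [h0]
      exact hminx _ (subset_closure (hememD s hs))
    exact second_deriv_nonneg_of_min hδpos hφ hψd hφmin
  -- final contradiction
  have hI₂ := hlow c₂ hc₂meas hMc₂ hc₂nn
  have hI₄ := hlow c₄ hc₄meas hMc₄ hc₄nn
  have hineq' := hineq t₀ ht₀Ioc x₀ hx₀D
  have hc₃x := (abs_le.1 (hMc₃ t₀ ht₀Ioc x₀ hx₀D)).2
  have hc₃nnx := hc₃nn t₀ ht₀Ioc x₀ hx₀D
  have h3I : M * (M * w t₀ x₀ * V) ≤ c₃ t₀ x₀ * ∫ y in D, c₂ t₀ y * w t₀ y := by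
    rcases le_or_gt 0 (∫ y in D, c₂ t₀ y * w t₀ y) with h | h
    · have h1 : 0 ≤ c₃ t₀ x₀ * ∫ y in D, c₂ t₀ y * w t₀ y := mul_nonneg hc₃nnx h
      have h2 : M * M * V * w t₀ x₀ ≤ 0 :=
        mul_nonpos_iff.2 (Or.inl ⟨mul_nonneg (mul_nonneg hM0 hM0) hV0, hW.le⟩)
      nlinarith [h1, h2]
    · have h1 : M * (M * w t₀ x₀ * V) ≤ M * ∫ y in D, c₂ t₀ y * w t₀ y :=
        mul_le_mul_of_nonneg_left hI₂ hM0
      have h2 : M * (∫ y in D, c₂ t₀ y * w t₀ y) ≤ c₃ t₀ x₀ * ∫ y in D, c₂ t₀ y * w t₀ y :=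
        mul_le_mul_of_nonpos_right hc₃x h.le
      linarith
  have h1W : M * w t₀ x₀ ≤ c₁ t₀ x₀ * w t₀ x₀ :=
    mul_le_mul_of_nonpos_right (abs_le.1 (hMc₁ t₀ ht₀Ioc x₀ hx₀D)).2 hW.le
  have hd'Δ : 0 ≤ d' * laplacian (w t₀) x₀ := mul_nonneg hd'.le hΔ
  have hfinal : M * w t₀ x₀ + M * (M * w t₀ x₀ * V) + M * w t₀ x₀ * V ≤ L * w t₀ x₀ := by
    calc M * w t₀ x₀ + M * (M * w t₀ x₀ * V) + M * w t₀ x₀ * V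
        ≤ c₁ t₀ x₀ * w t₀ x₀ + c₃ t₀ x₀ * (∫ y in D, c₂ t₀ y * w t₀ y)
          + ∫ y in D, c₄ t₀ y * w t₀ y := by linarith
      _ ≤ wt t₀ x₀ - d' * laplacian (w t₀) x₀ := hineq'
      _ ≤ wt t₀ x₀ := by linarith
      _ ≤ L * w t₀ x₀ := hwt_le
  rw [hLdef] at hfinal
  nlinarith
end

section
/- Let T > 0, let D ⊂ ℝ^d (d ≥ 1) be a bounded, open, connected set, and let β : [0,T] → ℝ be a continuous function. Let k > 0, γ ≥ 0, δ ≥ 0, η ≥ 0 be constants and let p, q, n > 1 and m ≥ 0 be exponents. Let z : [0,T] × D̄ → ℝ be continuous, with ∂z/∂t continuous and z(t,·) twice continuously differentiable in x on (0,T] × D, satisfying for all (t,x) ∈ (0,T] × D: ∂z/∂t(t,x) = Δz(t,x) + γ·z(t,x) + e^{(q−1)ηβ(t)}·∫_D |z(t,y)|^{q−1}z(t,y) dy − k·e^{(p−1)ηβ(t)}·|z(t,x)|^{p−1}z(t,x) + δ·e^{(m+n−1)ηβ(t)}·|z(t,x)|^m·∫_D |z(t,y)|^{n−1}z(t,y)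 dy, with z(t,x) = 0 for x ∈ ∂D, t ∈ (0,T], and z(0,x) = f(x) for x ∈ D, where f : D → ℝ is a nonnegative bounded function. Then z(t,x) ≥ 0 for all (t,x) ∈ [0,T] × D̄; moreover, if f is not identically zero, then z(t,x) > 0 for all (t,x) ∈ (0,T] × D. -/
open MeasureTheory Real Set

open Filter Topology


lemma deriv_nonpos_of_left_min {g : ℝ → ℝ} {a g' : ℝ}
    (h : HasDerivAt g g' a) (hm : ∀ᶠ s in 𝓝[<] a, g a ≤ g s) : g' ≤ 0 := by
  have ht : Tendsto (slope g a) (𝓝[<] a) (𝓝 g') :=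
    (hasDerivAt_iff_tendsto_slope.mp h).mono_left
      (nhdsWithin_mono a fun s hs => ne_of_lt hs)
  refine le_of_tendsto ht ?_
  filter_upwards [hm, self_mem_nhdsWithin] with s hs hs'
  have h1 : s - a < 0 := sub_neg.mpr hs'
  rw [slope_def_field]
  exact div_nonpos_of_nonneg_of_nonpos (sub_nonneg.2 hs) h1.le

lemma second_deriv_nonneg_of_min_s3 {g g1 : ℝ → ℝ} {c δ : ℝ} (hδ : 0 < δ)
    (hg : ∀ s ∈ Ioo (-δ) δ, HasDerivAt g (g1 s) s)
    (hg1 : HasDerivAt g1 c 0)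
    (hmin : ∀ s ∈ Ioo (-δ) δ, g 0 ≤ g s) : 0 ≤ c := by
  by_contra hc
  push_neg at hc
  have h0mem : (0:ℝ) ∈ Ioo (-δ) δ := ⟨by linarith, hδ⟩
  have h0 : g1 0 = 0 := by
    have hloc : IsLocalMin g 0 :=
      Filter.eventually_of_mem (Ioo_mem_nhds (by linarith) hδ) hmin
    exact hloc.hasDerivAt_eq_zero (hg 0 h0mem)
  have ht : Tendsto (slope g1 0) (𝓝[>] 0) (𝓝 c) :=
    (hasDerivAt_iff_tendsto_slope.mp hg1).mono_left
      (nhdsWithin_mono _ fun s hs => ne_of_gt hs)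
  have hev : ∀ᶠ s in 𝓝[>] (0:ℝ), slope g1 0 s < c/2 :=
    ht.eventually_lt_const (by linarith)
  have hev2 : ∀ᶠ s in 𝓝[>] (0:ℝ), s ∈ Ioo (0:ℝ) δ :=
    Filter.eventually_of_mem (Ioo_mem_nhdsGT_of_mem ⟨le_refl 0, hδ⟩) (fun s hs => hs)
  obtain ⟨u, hu, husub⟩ := mem_nhdsGT_iff_exists_Ioo_subset.mp (hev.and hev2)
  have hu0 : 0 < u := hu
  -- on Ioo 0 u, g1 s < 0
  have hg1neg : ∀ s ∈ Ioo (0:ℝ) u, g1 s < 0 := by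
    intro s hs
    obtain ⟨hslope, hsδ⟩ := husub hs
    rw [slope_def_field, h0, sub_zero, sub_zero] at hslope
    have := (div_lt_iff₀ hs.1).mp hslope
    nlinarith [hs.1, hc]
  set b := min u δ / 2 with hb
  have hb0 : 0 < b := by positivity
  have hbu : b < u := by
    have : min u δ ≤ u := min_le_left _ _
    simp only [hb]; linarith
  have hbδ : b < δ := by
    have : min u δ ≤ δ := min_le_right _ _
    simp only [hb]; linarith
  have hsub : Icc (0:ℝ) b ⊆ Ioo (-δ) δ := by
    intro s hs; exact ⟨by linarith [hs.1], by linarith [hs.2]⟩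
  have hcont : ContinuousOn g (Icc 0 b) := fun s hs =>
    ((hg s (hsub hs)).continuousAt).continuousWithinAt
  have hanti : StrictAntiOn g (Icc 0 b) := by
    refine strictAntiOn_of_deriv_neg (convex_Icc 0 b) hcont ?_
    intro s hs
    rw [interior_Icc] at hs
    rw [(hg s (hsub ⟨hs.1.le, hs.2.le⟩)).deriv]
    exact hg1neg s ⟨hs.1, lt_trans hs.2 hbu⟩
  have hlt : g b < g 0 :=
    hanti ⟨le_refl 0, hb0.le⟩ ⟨hb0.le, le_refl b⟩ hb0
  have := hmin b ⟨by linarith, hbδ⟩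
  linarith

lemma euclid_norm_sq_eq {d : ℕ} (v : EuclideanSpace ℝ (Fin d)) :
    ‖v‖^2 = ∑ j, (v j)^2 := by
  rw [EuclideanSpace.norm_eq, Real.sq_sqrt (by positivity)]
  exact Finset.sum_congr rfl fun j _ => by rw [Real.norm_eq_abs, sq_abs]

lemma psi_hasFDerivAt {d : ℕ} (x0 : EuclideanSpace ℝ (Fin d)) (r : ℝ)
    (y : EuclideanSpace ℝ (Fin d)) :
    HasFDerivAt (fun y : EuclideanSpace ℝ (Fin d) => r^2 - ‖y - x0‖^2)
      (-(2 • (innerSL ℝ (y - x0)).comp (ContinuousLinearMap.id ℝ (EuclideanSpace ℝ (Fin d))))) y := by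
  have h1 : HasFDerivAt (fun y : EuclideanSpace ℝ (Fin d) => y - x0)
      (ContinuousLinearMap.id ℝ (EuclideanSpace ℝ (Fin d))) y := (hasFDerivAt_id y).sub_const x0
  exact h1.norm_sq.const_sub (r^2)

lemma barrier_contDiff {d : ℕ} (x0 : EuclideanSpace ℝ (Fin d)) (r : ℝ) (K : ℕ) :
    ContDiff ℝ 2 (fun y : EuclideanSpace ℝ (Fin d) => (r^2 - ‖y - x0‖^2)^K) := by
  apply ContDiff.pow
  apply ContDiff.sub contDiff_const
  exact (contDiff_id.sub contDiff_const).norm_sq ℝ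

lemma laplacian_barrier {d : ℕ} (x0 : EuclideanSpace ℝ (Fin d)) (r : ℝ) {K : ℕ} (hK : 2 ≤ K)
    (x : EuclideanSpace ℝ (Fin d)) :
    laplacian (fun y : EuclideanSpace ℝ (Fin d) => (r^2 - ‖y - x0‖^2)^K) x
      = 4*(K:ℝ)*((K:ℝ)-1)*(r^2-‖x-x0‖^2)^(K-2)*‖x-x0‖^2
        - 2*(d:ℝ)*(K:ℝ)*(r^2-‖x-x0‖^2)^(K-1) := by
  set ψ : EuclideanSpace ℝ (Fin d) → ℝ := fun y => r^2 - ‖y - x0‖^2 with hψdef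
  have hG : ∀ y, HasFDerivAt (fun y => ψ y ^ K)
      (((K:ℝ) * ψ y ^ (K-1)) •
        (-((2:ℕ) • (innerSL ℝ (y - x0)).comp (ContinuousLinearMap.id ℝ (EuclideanSpace ℝ (Fin d)))))) y := by
    intro y
    have := (hasDerivAt_pow K (ψ y)).comp_hasFDerivAt y (psi_hasFDerivAt x0 r y)
    simpa [Function.comp_def] using this
  have hsummand : ∀ j : Fin d,
      fderiv ℝ (fun y => fderiv ℝ (fun y => ψ y ^ K) y (EuclideanSpace.single j 1)) x
        (EuclideanSpace.single j 1)
      = 4*(K:ℝ)*((K:ℝ)-1)*(ψ x)^(K-2)*(x j - x0 j)^2 - 2*(K:ℝ)*(ψ x)^(K-1) := by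
    intro j
    have hGval : (fun y => fderiv ℝ (fun y => ψ y ^ K) y (EuclideanSpace.single j 1))
        = fun y => ((K:ℝ) * ψ y ^ (K-1)) * (-(2 * (y j - x0 j))) := by
      funext y
      rw [(hG y).fderiv]
      simp [EuclideanSpace.inner_single_right]
    rw [hGval]
    -- derivative of the product
    have hu : HasFDerivAt (fun y => (K:ℝ) * ψ y ^ (K-1))
        (((K:ℝ) * (((K-1:ℕ):ℝ) * ψ x ^ (K-1-1))) •
          (-((2:ℕ) • (innerSL ℝ (x - x0)).comp (ContinuousLinearMap.id ℝ (EuclideanSpace ℝ (Fin d)))))) x := by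
      have h1 : HasFDerivAt (fun y => ψ y ^ (K-1))
          ((((K-1:ℕ):ℝ) * ψ x ^ (K-1-1)) •
            (-((2:ℕ) • (innerSL ℝ (x - x0)).comp (ContinuousLinearMap.id ℝ (EuclideanSpace ℝ (Fin d)))))) x := by
        have := (hasDerivAt_pow (K-1) (ψ x)).comp_hasFDerivAt x (psi_hasFDerivAt x0 r x)
        simpa [Function.comp_def] using this
      have := h1.const_mul (K:ℝ)
      rw [smul_smul] at this
      exact this
    have hbase : HasFDerivAt (fun y : EuclideanSpace ℝ (Fin d) => y j - x0 j)
        (EuclideanSpace.proj j : EuclideanSpace ℝ (Fin d) →L[ℝ] ℝ) x := by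
      have h := (EuclideanSpace.proj (𝕜 := ℝ) (ι := Fin d) j).hasFDerivAt (x := x)
      exact h.sub_const (x0 j)
    have hb : HasFDerivAt (fun y : EuclideanSpace ℝ (Fin d) => -(2 * (y j - x0 j)))
        (-((2:ℝ) • (EuclideanSpace.proj j : EuclideanSpace ℝ (Fin d) →L[ℝ] ℝ))) x :=
      (hbase.const_mul 2).neg
    have hprod := (hu.fun_mul hb).fderiv
    rw [hprod]
    simp only [ContinuousLinearMap.add_apply, ContinuousLinearMap.smul_apply,
      ContinuousLinearMap.neg_apply, ContinuousLinearMap.comp_apply,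
      ContinuousLinearMap.coe_smul', Pi.smul_apply, ContinuousLinearMap.id_apply,
      innerSL_apply_apply, smul_eq_mul]
    rw [EuclideanSpace.inner_single_right]
    have hproj : (EuclideanSpace.proj j : EuclideanSpace ℝ (Fin d) →L[ℝ] ℝ)
        (EuclideanSpace.single j 1) = 1 := by simp
    rw [hproj]
    have hcast : ((K-1:ℕ):ℝ) = (K:ℝ) - 1 := by
      rw [Nat.cast_sub (by omega)]; norm_num
    have he2 : K - 1 - 1 = K - 2 := by omega
    have hsub : (x - x0) j = x j - x0 j := rfl
    rw [hcast, he2, hsub]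
    simp only [starRingEnd_apply, star_trivial]
    push_cast
    ring
  unfold laplacian
  rw [Finset.sum_congr rfl (fun j _ => hsummand j)]
  rw [Finset.sum_sub_distrib, ← Finset.mul_sum, Finset.sum_const, Finset.card_univ,
    Fintype.card_fin]
  have : ∑ j, (x j - x0 j)^2 = ‖x - x0‖^2 := by
    rw [euclid_norm_sq_eq]
    exact Finset.sum_congr rfl fun j _ => rfl
  rw [this]
  push_cast
  ring

lemma laplacian_barrier_ge {d : ℕ} (hd : 1 ≤ d) (x0 x : EuclideanSpace ℝ (Fin d)) {r : ℝ}
    (hr : 0 < r) (hx : ‖x - x0‖ < r) :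
    -(4*(d:ℝ)*((d:ℝ)+2)) * (r^2 - ‖x-x0‖^2)^(d+2)
      ≤ r^2 * laplacian (fun y : EuclideanSpace ℝ (Fin d) => (r^2 - ‖y - x0‖^2)^(d+2)) x := by
  rw [laplacian_barrier x0 r (by omega) x]
  have he1 : d + 2 - 2 = d := by omega
  have he2 : d + 2 - 1 = d + 1 := by omega
  rw [he1, he2]
  have hd1 : (1:ℝ) ≤ (d:ℝ) := by exact_mod_cast hd
  set ρ : ℝ := ‖x - x0‖^2 with hρdef
  have hρ0 : 0 ≤ ρ := by positivity
  have hρr : ρ < r^2 := by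
    rw [hρdef]
    exact pow_lt_pow_left₀ hx (norm_nonneg _) (by norm_num)
  set ψ : ℝ := r^2 - ρ with hψdef
  have hψpos : 0 < ψ := by simp [hψdef]; linarith
  have hψr : ψ ≤ r^2 := by simp [hψdef]; linarith
  have hKcast : ((d:ℝ)+2) - 1 = (d:ℝ) + 1 := by ring
  push_cast
  rw [hKcast]
  have hpowd : 0 ≤ ψ^d := pow_nonneg hψpos.le d
  have hpowd1 : 0 ≤ ψ^(d+1) := pow_nonneg hψpos.le (d+1)
  have hsucc1 : ψ^(d+1) = ψ^d * ψ := pow_succ ψ d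
  have hsucc2 : ψ^(d+2) = ψ^(d+1) * ψ := pow_succ ψ (d+1)
  rcases le_or_gt ((d:ℝ)*r^2/(2*((d:ℝ)+1))) ρ with hcase | hcase
  · -- large ρ: expression is nonneg
    have hF1 : (d:ℝ)*r^2 ≤ ρ * (2*((d:ℝ)+1)) := (div_le_iff₀ (by positivity)).mp hcase
    have key : 2*(d:ℝ)*((d:ℝ)+2)*ψ ≤ 4*((d:ℝ)+2)*((d:ℝ)+1)*ρ := by
      nlinarith [mul_le_mul_of_nonneg_left hψr (by positivity : (0:ℝ) ≤ 2*(d:ℝ)*((d:ℝ)+2)),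
        mul_le_mul_of_nonneg_left hF1 (by positivity : (0:ℝ) ≤ 2*((d:ℝ)+2))]
    have inner_nonneg : 0 ≤ 4*((d:ℝ)+2)*((d:ℝ)+1)*ψ^d*ρ - 2*(d:ℝ)*((d:ℝ)+2)*ψ^(d+1) := by
      rw [hsucc1]
      nlinarith [mul_nonneg (sub_nonneg.mpr key) hpowd]
    rw [hsucc2]
    nlinarith [mul_nonneg (mul_nonneg (by positivity : (0:ℝ) ≤ 4*(d:ℝ)*((d:ℝ)+2)) hpowd1) hψpos.le,
      mul_nonneg (sq_nonneg r) inner_nonneg]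
  · -- small ρ: ψ ≥ r^2/2
    have hF1 : ρ * (2*((d:ℝ)+1)) ≤ (d:ℝ)*r^2 := le_of_lt ((lt_div_iff₀ (by positivity)).mp hcase)
    have h2 : (0:ℝ) < (d:ℝ)+1 := by linarith
    have h3 : r^2 ≤ ((d:ℝ)+1) * (r^2 - 2*ρ) := by nlinarith
    have hhalf : r^2 ≤ 2*ψ := by nlinarith
    have main : 2*(d:ℝ)*((d:ℝ)+2)*(r^2*ψ^(d+1)) ≤ 4*(d:ℝ)*((d:ℝ)+2)*(ψ*ψ^(d+1)) := by
      nlinarith [mul_le_mul_of_nonneg_left (mul_le_mul_of_nonneg_right hhalf hpowd1)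
        (by positivity : (0:ℝ) ≤ 2*(d:ℝ)*((d:ℝ)+2))]
    have first_nonneg : 0 ≤ r^2 * (4*((d:ℝ)+2)*((d:ℝ)+1)*ψ^d*ρ) := by positivity
    rw [hsucc2]
    linarith [main, first_nonneg]

lemma dirder2_nonneg_of_min {d : ℕ} {U : Set (EuclideanSpace ℝ (Fin d))}
    {g : EuclideanSpace ℝ (Fin d) → ℝ} {x : EuclideanSpace ℝ (Fin d)}
    (hU : IsOpen U) (hx : x ∈ U) (hg : ContDiffOn ℝ 2 g U)
    (hmin : ∀ y ∈ U, g x ≤ g y) (e : EuclideanSpace ℝ (Fin d)) (he : ‖e‖ = 1) :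
    0 ≤ fderiv ℝ (fun y => fderiv ℝ g y e) x e := by
  obtain ⟨δ, hδ, hball⟩ := Metric.isOpen_iff.mp hU x hx
  have hmem : ∀ s : ℝ, s ∈ Ioo (-δ) δ → x + s • e ∈ U := by
    intro s hs
    apply hball
    rw [Metric.mem_ball, dist_eq_norm]
    have h1 : x + s • e - x = s • e := by abel
    rw [h1, norm_smul, he, mul_one, Real.norm_eq_abs, abs_lt]
    exact ⟨hs.1, hs.2⟩
  have hgdiff : DifferentiableOn ℝ g U := hg.differentiableOn (by norm_num)
  have hF1 : ContDiffOn ℝ 1 (fun y => fderiv ℝ g y) U := hg.fderiv_of_isOpen hU (by norm_num)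
  have hF1e : ContDiffOn ℝ 1 (fun y => fderiv ℝ g y e) U := hF1.clm_apply contDiffOn_const
  have hline : ∀ s : ℝ, HasDerivAt (fun t : ℝ => x + t • e) e s := by
    intro s
    simpa using ((hasDerivAt_id s).smul_const e).const_add x
  have hgl : ∀ s ∈ Ioo (-δ) δ,
      HasDerivAt (fun t => g (x + t • e)) (fderiv ℝ g (x + s • e) e) s := by
    intro s hs
    have hd : DifferentiableAt ℝ g (x + s • e) :=
      (hgdiff (x + s • e) (hmem s hs)).differentiableAt (hU.mem_nhds (hmem s hs))
    exact hd.hasFDerivAt.comp_hasDerivAt s (hline s)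
  have hF1d : DifferentiableAt ℝ (fun y => fderiv ℝ g y e) x := by
    have h := hF1e.differentiableOn one_ne_zero
    exact (h x hx).differentiableAt (hU.mem_nhds hx)
  have h0 : x + (0:ℝ) • e = x := by simp
  have hg1 : HasDerivAt (fun s : ℝ => fderiv ℝ g (x + s • e) e)
      (fderiv ℝ (fun y => fderiv ℝ g y e) x e) 0 := by
    have hf : HasFDerivAt (fun y => fderiv ℝ g y e)
        (fderiv ℝ (fun y => fderiv ℝ g y e) x) (x + (0:ℝ) • e) := by
      rw [h0]; exact hF1d.hasFDerivAt
    have h2 := hf.comp_hasDerivAt 0 (hline 0)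
    simpa [Function.comp_def] using h2
  refine second_deriv_nonneg_of_min_s3 hδ hgl hg1 ?_
  intro s hs
  rw [h0]
  exact hmin _ (hmem s hs)

lemma laplacian_nonneg_of_min {d : ℕ} {U : Set (EuclideanSpace ℝ (Fin d))}
    {g : EuclideanSpace ℝ (Fin d) → ℝ} {x : EuclideanSpace ℝ (Fin d)}
    (hU : IsOpen U) (hx : x ∈ U) (hg : ContDiffOn ℝ 2 g U)
    (hmin : ∀ y ∈ U, g x ≤ g y) : 0 ≤ laplacian g x := by
  refine Finset.sum_nonneg fun i _ => ?_
  exact dirder2_nonneg_of_min hU hx hg hmin _ (by simp)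

lemma laplacian_const_mul {d : ℕ} (C : ℝ) {h : EuclideanSpace ℝ (Fin d) → ℝ}
    (hh : ContDiff ℝ 2 h) (x : EuclideanSpace ℝ (Fin d)) :
    laplacian (fun y => C * h y) x = C * laplacian h x := by
  unfold laplacian
  rw [Finset.mul_sum]
  refine Finset.sum_congr rfl fun i _ => ?_
  have hdiff : Differentiable ℝ h := hh.differentiable (by norm_num)
  have heq : (fun y => fderiv ℝ (fun z => C * h z) y (EuclideanSpace.single i 1))
      = fun y => C * fderiv ℝ h y (EuclideanSpace.single i 1) := by
    funext y
    rw [fderiv_const_mul (hdiff y) C]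
    simp
  rw [heq]
  have hF1 : ContDiff ℝ 1 (fun y => fderiv ℝ h y (EuclideanSpace.single i 1)) := by
    have h1 : ContDiff ℝ 1 (fderiv ℝ h) := hh.fderiv_right (by norm_num)
    exact h1.clm_apply contDiff_const
  rw [fderiv_const_mul (hF1.differentiable one_ne_zero x) C]
  simp

lemma laplacian_sub {d : ℕ} {U : Set (EuclideanSpace ℝ (Fin d))}
    {g h : EuclideanSpace ℝ (Fin d) → ℝ} {x : EuclideanSpace ℝ (Fin d)}
    (hU : IsOpen U) (hx : x ∈ U)
    (hg : ContDiffOn ℝ 2 g U) (hh : ContDiff ℝ 2 h) :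
    laplacian (fun y => g y - h y) x = laplacian g x - laplacian h x := by
  unfold laplacian
  rw [← Finset.sum_sub_distrib]
  refine Finset.sum_congr rfl fun i _ => ?_
  have hgd : ∀ y ∈ U, DifferentiableAt ℝ g y := by
    intro y hy
    exact ((hg.differentiableOn (by norm_num)) y hy).differentiableAt (hU.mem_nhds hy)
  have hhd : Differentiable ℝ h := hh.differentiable (by norm_num)
  have heq : Set.EqOn (fun y => fderiv ℝ (fun z => g z - h z) y (EuclideanSpace.single i 1))
      (fun y => fderiv ℝ g y (EuclideanSpace.single i 1)
        - fderiv ℝ h y (EuclideanSpace.single i 1)) U := by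
    intro y hy
    simp only
    rw [fderiv_fun_sub (hgd y hy) (hhd y)]
    simp
  have heq' : (fun y => fderiv ℝ (fun z => g z - h z) y (EuclideanSpace.single i 1))
      =ᶠ[nhds x] (fun y => fderiv ℝ g y (EuclideanSpace.single i 1)
        - fderiv ℝ h y (EuclideanSpace.single i 1)) :=
    Filter.eventuallyEq_of_mem (hU.mem_nhds hx) heq
  rw [heq'.fderiv_eq]
  have h1 : DifferentiableAt ℝ (fun y => fderiv ℝ g y (EuclideanSpace.single i 1)) x := by
    have hF1 : ContDiffOn ℝ 1 (fun y => fderiv ℝ g y (EuclideanSpace.single i 1)) U :=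
      (hg.fderiv_of_isOpen hU (by norm_num)).clm_apply contDiffOn_const
    have h := hF1.differentiableOn one_ne_zero
    exact (h x hx).differentiableAt (hU.mem_nhds hx)
  have h2 : DifferentiableAt ℝ (fun y => fderiv ℝ h y (EuclideanSpace.single i 1)) x := by
    have hF1 : ContDiff ℝ 1 (fun y => fderiv ℝ h y (EuclideanSpace.single i 1)) :=
      (hh.fderiv_right (by norm_num)).clm_apply contDiff_const
    exact hF1.differentiable one_ne_zero x
  rw [fderiv_fun_sub h1 h2]
  simp

set_option maxHeartbeats 1000000 in
/-- Nonnegativity and strict positivity of the solution of the signed auxiliary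
problem for the transformed random PDE. -/
theorem statement3 {d : ℕ} (hd : 1 ≤ d) {T : ℝ} (hT : 0 < T)
    {D : Set (EuclideanSpace ℝ (Fin d))} (hDopen : IsOpen D) (hDconn : IsConnected D)
    (hDbdd : Bornology.IsBounded D)
    (β : ℝ → ℝ) (hβ : ContinuousOn β (Icc 0 T))
    {k γ δ η : ℝ} (hk : 0 < k) (hγ : 0 ≤ γ) (hδ : 0 ≤ δ) (hη : 0 ≤ η)
    {p q n m : ℝ} (hp : 1 < p) (hq : 1 < q) (hn : 1 < n) (hm : 0 ≤ m)
    (f : EuclideanSpace ℝ (Fin d) → ℝ)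
    -- `f` is nonnegative and bounded on `D`
    (hf_nn : ∀ x ∈ D, 0 ≤ f x)
    (hf_bdd : ∃ M, ∀ x ∈ D, f x ≤ M)
    (z zt : ℝ → EuclideanSpace ℝ (Fin d) → ℝ)
    -- `z` is continuous on `[0,T] × D̄`
    (hz_cont : ContinuousOn (fun pr : ℝ × EuclideanSpace ℝ (Fin d) => z pr.1 pr.2)
      (Icc 0 T ×ˢ closure D))
    -- the time derivative `∂z/∂t = zt` exists and is continuous on `(0,T] × D`
    (hz_t : ∀ t ∈ Ioc 0 T, ∀ x ∈ D, HasDerivAt (fun s => z s x) (zt t x) t)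
    (hzt_cont : ContinuousOn (fun pr : ℝ × EuclideanSpace ℝ (Fin d) => zt pr.1 pr.2)
      (Ioc 0 T ×ˢ D))
    (hz_x : ∀ t ∈ Ioc 0 T, ContDiffOn ℝ 2 (z t) D)
    -- `z` solves the signed transformed PDE on `(0,T] × D`
    (hz_pde : ∀ t ∈ Ioc 0 T, ∀ x ∈ D,
      zt t x = laplacian (z t) x + γ * z t x
        + exp ((q - 1) * η * β t) * (∫ y in D, |z t y| ^ (q - 1) * z t y)
        - k * exp ((p - 1) * η * β t) * (|z t x| ^ (p - 1) * z t x)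
        + δ * exp ((m + n - 1) * η * β t) * |z t x| ^ m
            * (∫ y in D, |z t y| ^ (n - 1) * z t y))
    (hz_bdry : ∀ t ∈ Ioc 0 T, ∀ x ∈ frontier D, z t x = 0)
    (hz_init : ∀ x ∈ D, z 0 x = f x) :
    (∀ t ∈ Icc 0 T, ∀ x ∈ closure D, 0 ≤ z t x) ∧
      ((¬ ∀ x ∈ D, f x = 0) → ∀ t ∈ Ioc 0 T, ∀ x ∈ D, 0 < z t x) := by
  classical
  have hDne : D.Nonempty := hDconn.nonempty
  have hcD : IsCompact (closure D) :=
    Metric.isCompact_of_isClosed_isBounded isClosed_closure hDbdd.closure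
  have h0T : (0:ℝ) ∈ Icc 0 T := ⟨le_refl 0, hT.le⟩
  have hKc : IsCompact (Icc (0:ℝ) T ×ˢ closure D) := isCompact_Icc.prod hcD
  have hKne : (Icc (0:ℝ) T ×ˢ closure D).Nonempty :=
    ⟨(0, hDne.choose), ⟨h0T, subset_closure hDne.choose_spec⟩⟩
  -- bound on |z|
  have habs : ContinuousOn (fun pr : ℝ × EuclideanSpace ℝ (Fin d) => |z pr.1 pr.2|)
      (Icc (0:ℝ) T ×ˢ closure D) := hz_cont.abs
  obtain ⟨PN, hPNmem, hPNmax⟩ := hKc.exists_isMaxOn hKne habs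
  set N := |z PN.1 PN.2| with hNdef
  have hNnn : 0 ≤ N := abs_nonneg _
  have hN : ∀ t ∈ Icc 0 T, ∀ x ∈ closure D, |z t x| ≤ N := by
    intro t ht x hx
    exact hPNmax (show ((t,x) : ℝ × EuclideanSpace ℝ (Fin d)) ∈ Icc 0 T ×ˢ closure D from ⟨ht, hx⟩)
  -- bound on β
  obtain ⟨tβ, htβ, hβmax⟩ := isCompact_Icc.exists_isMaxOn ⟨0, h0T⟩ hβ
  set Bβ := β tβ with hBβdef
  have hβle : ∀ t ∈ Icc 0 T, β t ≤ Bβ := fun t ht => hβmax ht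
  set Eq' := exp ((q-1)*η*Bβ) with hEqdef
  set Ep' := exp ((p-1)*η*Bβ) with hEpdef
  set Emn' := exp ((m+n-1)*η*Bβ) with hEmndef
  have hEq : ∀ t ∈ Icc 0 T, exp ((q-1)*η*β t) ≤ Eq' := by
    intro t ht
    apply exp_le_exp.mpr
    calc (q-1)*η*β t = ((q-1)*η)*β t := by ring
    _ ≤ ((q-1)*η)*Bβ := mul_le_mul_of_nonneg_left (hβle t ht)
        (mul_nonneg (by linarith only [hq, hp, hn, hm]) hη)
    _ = (q-1)*η*Bβ := by ring
  have hEp : ∀ t ∈ Icc 0 T, exp ((p-1)*η*β t) ≤ Ep' := by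
    intro t ht
    apply exp_le_exp.mpr
    calc (p-1)*η*β t = ((p-1)*η)*β t := by ring
    _ ≤ ((p-1)*η)*Bβ := mul_le_mul_of_nonneg_left (hβle t ht)
        (mul_nonneg (by linarith only [hq, hp, hn, hm]) hη)
    _ = (p-1)*η*Bβ := by ring
  have hEmn : ∀ t ∈ Icc 0 T, exp ((m+n-1)*η*β t) ≤ Emn' := by
    intro t ht
    apply exp_le_exp.mpr
    calc (m+n-1)*η*β t = ((m+n-1)*η)*β t := by ring
    _ ≤ ((m+n-1)*η)*Bβ := mul_le_mul_of_nonneg_left (hβle t ht)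
        (mul_nonneg (by linarith only [hq, hp, hn, hm]) hη)
    _ = (m+n-1)*η*Bβ := by ring
  have hEq0 : 0 < Eq' := exp_pos _
  have hEp0 : 0 < Ep' := exp_pos _
  have hEmn0 : 0 < Emn' := exp_pos _
  -- measure facts
  have hDmeas : MeasurableSet D := hDopen.measurableSet
  have hDfin : volume D < ⊤ := lt_of_le_of_lt (measure_mono subset_closure) hcD.measure_lt_top
  set V := (volume D).toReal with hVdef
  have hV0 : 0 ≤ V := ENNReal.toReal_nonneg
  -- slice continuity
  have hslice : ∀ t ∈ Icc 0 T, ContinuousOn (z t) (closure D) := by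
    intro t ht
    have hmk : ContinuousOn (fun x : EuclideanSpace ℝ (Fin d) => ((t, x) : ℝ × _))
        (closure D) := (Continuous.prodMk_right t).continuousOn
    exact hz_cont.comp hmk (fun x hx => ⟨ht, hx⟩)
  -- integrability
  have hInt : ∀ t ∈ Icc 0 T, ∀ e : ℝ, 0 < e →
      IntegrableOn (fun y => |z t y| ^ e * z t y) D volume := by
    intro t ht e he
    have h1 : Continuous fun r : ℝ => |r| ^ e * r := by
      apply Continuous.mul _ continuous_id
      rw [continuous_iff_continuousAt]
      intro r
      exact (Real.continuousAt_rpow_const _ _ (Or.inr he.le)).comp continuous_abs.continuousAt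
    have hcont : ContinuousOn (fun y => |z t y| ^ e * z t y) (closure D) :=
      h1.comp_continuousOn (hslice t ht)
    exact (hcont.integrableOn_compact hcD).mono_set subset_closure
  -- initial data on closure
  have hz0cl : ∀ x ∈ closure D, 0 ≤ z 0 x := by
    intro x hx
    have hcw : ContinuousWithinAt (z 0) D x :=
      ((hslice 0 h0T) x hx).mono subset_closure
    have hne : (nhdsWithin x D).NeBot := mem_closure_iff_nhdsWithin_neBot.mp hx
    refine ge_of_tendsto hcw ?_
    filter_upwards [self_mem_nhdsWithin] with y hy
    rw [hz_init y hy]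
    exact hf_nn y hy
  -- PART 1
  have key : ∀ t ∈ Icc 0 T, ∀ x ∈ closure D, 0 ≤ z t x := by
    set lam := γ + Eq' * N ^ (q-1) * V + δ * Emn' * N ^ (m+n-1) * V + 1 with hlamdef
    set w : ℝ × EuclideanSpace ℝ (Fin d) → ℝ :=
      fun pr => exp (-(lam * pr.1)) * z pr.1 pr.2 with hwdef
    have hwcont : ContinuousOn w (Icc (0:ℝ) T ×ˢ closure D) :=
      ((Real.continuous_exp.comp ((continuous_const.mul continuous_fst).neg)).continuousOn).mul
        hz_cont
    obtain ⟨⟨t0, x0⟩, hP0mem, hP0min⟩ := hKc.exists_isMinOn hKne hwcont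
    obtain ⟨ht0I, hx0cl⟩ := hP0mem
    have hminall : ∀ s ∈ Icc (0:ℝ) T, ∀ y ∈ closure D, w (t0, x0) ≤ w (s, y) := by
      intro s hs y hy
      exact hP0min (show ((s,y) : ℝ × EuclideanSpace ℝ (Fin d)) ∈ Icc 0 T ×ˢ closure D from ⟨hs, hy⟩)
    intro t ht x hx
    by_contra hneg
    push_neg at hneg
    have hwP0neg : w (t0, x0) < 0 := by
      have h1 : w (t, x) < 0 := mul_neg_of_pos_of_neg (exp_pos _) hneg
      exact lt_of_le_of_lt (hminall t ht x hx) h1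
    have hz0neg : z t0 x0 < 0 := by
      by_contra hge
      push_neg at hge
      have : 0 ≤ w (t0, x0) := mul_nonneg (exp_pos _).le hge
      linarith only [this, hwP0neg]
    have ht0pos : 0 < t0 := by
      rcases eq_or_lt_of_le ht0I.1 with he | h
      · exfalso
        have he' : (0:ℝ) = t0 := he
        have h1 := hz0cl x0 hx0cl
        rw [← he'] at hz0neg
        linarith only [h1, hz0neg]
      · exact h
    have ht0Ioc : t0 ∈ Ioc 0 T := ⟨ht0pos, ht0I.2⟩
    have hx0D : x0 ∈ D := by
      by_contra hnot
      have hfr : x0 ∈ frontier D := by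
        rw [hDopen.frontier_eq]
        exact ⟨hx0cl, hnot⟩
      have := hz_bdry t0 ht0Ioc x0 hfr
      linarith only [this, hz0neg]
    have hexp0 : 0 < exp (-(lam * t0)) := exp_pos _
    have hminx : ∀ y ∈ closure D, z t0 x0 ≤ z t0 y := by
      intro y hy
      have h1 := hminall t0 ht0I y hy
      exact (mul_le_mul_iff_right₀ hexp0).mp h1
    -- time derivative
    have hder := hz_t t0 ht0Ioc x0 hx0D
    have hexpder : HasDerivAt (fun s : ℝ => exp (-(lam*s))) (-lam * exp (-(lam*t0))) t0 := by
      have h0 : HasDerivAt (fun s : ℝ => -(lam*s)) (-lam) t0 := by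
        exact ((hasDerivAt_id t0).const_mul lam).neg.congr_deriv (by simp)
      simpa [mul_comm] using h0.exp
    have hwder : HasDerivAt (fun s => exp (-(lam*s)) * z s x0)
        (-lam * exp (-(lam*t0)) * z t0 x0 + exp (-(lam*t0)) * zt t0 x0) t0 :=
      hexpder.mul hder
    have hwder_le : -lam * exp (-(lam*t0)) * z t0 x0 + exp (-(lam*t0)) * zt t0 x0 ≤ 0 := by
      apply deriv_nonpos_of_left_min hwder
      filter_upwards [Ioo_mem_nhdsLT_of_mem
        (⟨ht0pos, le_refl t0⟩ : t0 ∈ Ioc 0 t0)] with s hs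
      exact hminall s ⟨hs.1.le, hs.2.le.trans ht0I.2⟩ x0 hx0cl
    have hzt_le : zt t0 x0 ≤ lam * z t0 x0 := by
      have h1 : exp (-(lam*t0)) * zt t0 x0 ≤ exp (-(lam*t0)) * (lam * z t0 x0) := by
        linarith only [hwder_le]
      exact (mul_le_mul_iff_right₀ hexp0).mp h1
    -- laplacian
    have hlap : 0 ≤ laplacian (z t0) x0 :=
      laplacian_nonneg_of_min hDopen hx0D (hz_x t0 ht0Ioc)
        (fun y hy => hminx y (subset_closure hy))
    set z0 := z t0 x0 with hz0def
    have hz0N : |z0| ≤ N := hN t0 ht0I x0 hx0cl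
    have hN0 : 0 < N := lt_of_lt_of_le (abs_pos.mpr hz0neg.ne) hz0N
    -- integral lower bounds
    have hIlb : ∀ e : ℝ, 0 < e → N^e * z0 * V ≤ ∫ y in D, |z t0 y|^e * z t0 y := by
      intro e he
      have hint := hInt t0 ht0I e he
      have hconstI : IntegrableOn (fun _ : EuclideanSpace ℝ (Fin d) => N^e * z0) D volume :=
        integrableOn_const hDfin.ne
      have hmono : ∀ y ∈ D, N^e * z0 ≤ |z t0 y|^e * z t0 y := by
        intro y hy
        have hyc := subset_closure hy
        have h1 : z0 ≤ z t0 y := hminx y hyc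
        have h2 : |z t0 y| ≤ N := hN t0 ht0I y hyc
        rcases le_or_gt 0 (z t0 y) with hpos | hneg2
        · have ha : N^e * z0 ≤ 0 :=
            mul_nonpos_of_nonneg_of_nonpos (Real.rpow_nonneg hNnn e) hz0neg.le
          exact ha.trans (mul_nonneg (Real.rpow_nonneg (abs_nonneg _) e) hpos)
        · have habs_le : |z t0 y| ≤ |z0| := by
            rw [abs_of_neg hneg2, abs_of_neg hz0neg]
            linarith only [h1]
          have h3 : |z t0 y|^e ≤ N^e := Real.rpow_le_rpow (abs_nonneg _) h2 he.le
          have h4 : |z t0 y|^e * |z t0 y| ≤ N^e * |z0| :=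
            mul_le_mul h3 habs_le (abs_nonneg _) (Real.rpow_nonneg hNnn e)
          calc N^e * z0 = -(N^e * |z0|) := by rw [abs_of_neg hz0neg]; ring
          _ ≤ -(|z t0 y|^e * |z t0 y|) := by linarith only [h4]
          _ = |z t0 y|^e * z t0 y := by rw [abs_of_neg hneg2]; ring
      calc N^e * z0 * V = ∫ _y in D, N^e * z0 := by
            rw [setIntegral_const, smul_eq_mul, measureReal_def, hVdef]; ring
      _ ≤ _ := setIntegral_mono_on hconstI hint hDmeas hmono
    have hIq_lb := hIlb (q-1) (by linarith only [hq])
    have hIn_lb := hIlb (n-1) (by linarith only [hn])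
    -- PDE
    have hpde := hz_pde t0 ht0Ioc x0 hx0D
    set Iq := ∫ y in D, |z t0 y|^(q-1) * z t0 y with hIqdef
    set In := ∫ y in D, |z t0 y|^(n-1) * z t0 y with hIndef
    set A := exp ((q-1)*η*β t0) with hAdef
    set B := exp ((p-1)*η*β t0) with hBdef
    set C := exp ((m+n-1)*η*β t0) with hCdef
    have hApos : 0 < A := exp_pos _
    have hBpos : 0 < B := exp_pos _
    have hCpos : 0 < C := exp_pos _
    have hAle : A ≤ Eq' := hEq t0 ht0I
    have hCle : C ≤ Emn' := hEmn t0 ht0I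
    have hterm_q : Eq' * N^(q-1) * V * z0 ≤ A * Iq := by
      rcases le_or_gt 0 Iq with hpos | hneg2
      · have h1 : Eq' * N^(q-1) * V * z0 ≤ 0 :=
          mul_nonpos_of_nonneg_of_nonpos
            (by positivity) hz0neg.le
        exact h1.trans (mul_nonneg hApos.le hpos)
      · have h1 : Eq' * Iq ≤ A * Iq := mul_le_mul_of_nonpos_right hAle hneg2.le
        have h2 : Eq' * (N^(q-1) * z0 * V) ≤ Eq' * Iq :=
          mul_le_mul_of_nonneg_left hIq_lb hEq0.le
        have h3 : Eq' * N^(q-1) * V * z0 = Eq' * (N^(q-1) * z0 * V) := by ring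
        linarith only [h1, h2, h3]
    have hterm_p : 0 ≤ -(k * B * (|z0|^(p-1) * z0)) := by
      have h1 : |z0|^(p-1) * z0 ≤ 0 :=
        mul_nonpos_of_nonneg_of_nonpos (Real.rpow_nonneg (abs_nonneg _) _) hz0neg.le
      have h2 : k * B * (|z0|^(p-1) * z0) ≤ 0 :=
        mul_nonpos_of_nonneg_of_nonpos (by positivity) h1
      linarith only [h2]
    have hterm_mn : δ * Emn' * N^(m+n-1) * V * z0 ≤ δ * C * |z0|^m * In := by
      rcases le_or_gt 0 In with hpos | hneg2
      · have h1 : δ * Emn' * N^(m+n-1) * V * z0 ≤ 0 :=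
          mul_nonpos_of_nonneg_of_nonpos (by positivity) hz0neg.le
        refine h1.trans ?_
        have : 0 ≤ δ * C * |z0|^m := by positivity
        exact mul_nonneg this hpos
      · have hcoef : δ * C * |z0|^m ≤ δ * Emn' * N^m := by
          apply mul_le_mul
          · exact mul_le_mul_of_nonneg_left hCle hδ
          · exact Real.rpow_le_rpow (abs_nonneg _) hz0N hm
          · exact Real.rpow_nonneg (abs_nonneg _) m
          · positivity
        have h1 : (δ * Emn' * N^m) * In ≤ (δ * C * |z0|^m) * In :=
          mul_le_mul_of_nonpos_right hcoef hneg2.le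
        have h2 : (δ * Emn' * N^m) * (N^(n-1) * z0 * V) ≤ (δ * Emn' * N^m) * In :=
          mul_le_mul_of_nonneg_left hIn_lb (by positivity)
        have h3 : N^m * N^(n-1) = N^(m+n-1) := by
          rw [← Real.rpow_add hN0]
          ring_nf
        have h4 : δ * Emn' * N^(m+n-1) * V * z0 = (δ * Emn' * N^m) * (N^(n-1) * z0 * V) := by
          rw [← h3]; ring
        have h5 : δ * C * |z0|^m * In = (δ * C * |z0|^m) * In := by ring
        linarith only [h1, h2, h4, h5]
    have hsum : γ*z0 + Eq'*N^(q-1)*V*z0 + δ*Emn'*N^(m+n-1)*V*z0 ≤ zt t0 x0 := by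
      rw [hpde]
      have : laplacian (z t0) x0 + γ * z0 + A * Iq - k * B * (|z0|^(p-1) * z0)
          + δ * C * |z0|^m * In
          ≥ γ*z0 + Eq'*N^(q-1)*V*z0 + δ*Emn'*N^(m+n-1)*V*z0 := by
        linarith only [hlap, hterm_q, hterm_p, hterm_mn]
      linarith only [this]
    have hexpand : γ*z0 + Eq'*N^(q-1)*V*z0 + δ*Emn'*N^(m+n-1)*V*z0 = (lam - 1) * z0 := by
      rw [hlamdef]; ring
    rw [hexpand] at hsum
    have hfin : (lam - 1) * z0 ≤ lam * z0 := le_trans hsum hzt_le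
    linarith only [hfin, hz0neg]
  refine ⟨key, ?_⟩
  -- zero at one interior point spreads to all of D at that time
  have hspread : ∀ t1 ∈ Ioc 0 T, ∀ x1 ∈ D, z t1 x1 = 0 → ∀ x2 ∈ D, z t1 x2 = 0 := by
    intro t1 ht1 x1 hx1 hz1 x2 hx2
    have ht1I : t1 ∈ Icc 0 T := ⟨ht1.1.le, ht1.2⟩
    have hdle : zt t1 x1 ≤ 0 := by
      apply deriv_nonpos_of_left_min (hz_t t1 ht1 x1 hx1)
      filter_upwards [Ioo_mem_nhdsLT_of_mem
        (⟨ht1.1, le_refl t1⟩ : t1 ∈ Ioc 0 t1)] with s hs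
      rw [hz1]
      exact key s ⟨hs.1.le, hs.2.le.trans ht1.2⟩ x1 (subset_closure hx1)
    have hlap1 : 0 ≤ laplacian (z t1) x1 :=
      laplacian_nonneg_of_min hDopen hx1 (hz_x t1 ht1)
        (fun y hy => by rw [hz1]; exact key t1 ht1I y (subset_closure hy))
    have hIq_nonneg : 0 ≤ ∫ y in D, |z t1 y|^(q-1) * z t1 y :=
      setIntegral_nonneg hDmeas (fun y hy =>
        mul_nonneg (Real.rpow_nonneg (abs_nonneg _) _) (key t1 ht1I y (subset_closure hy)))
    have hIn_nonneg : 0 ≤ ∫ y in D, |z t1 y|^(n-1) * z t1 y :=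
      setIntegral_nonneg hDmeas (fun y hy =>
        mul_nonneg (Real.rpow_nonneg (abs_nonneg _) _) (key t1 ht1I y (subset_closure hy)))
    have hpde := hz_pde t1 ht1 x1 hx1
    rw [hz1] at hpde
    have hA1 : 0 < exp ((q-1)*η*β t1) := exp_pos _
    have hdel : 0 ≤ δ * exp ((m+n-1)*η*β t1) * |(0:ℝ)|^m
        * (∫ y in D, |z t1 y|^(n-1) * z t1 y) :=
      mul_nonneg (mul_nonneg (mul_nonneg hδ (exp_pos _).le)
        (Real.rpow_nonneg (abs_nonneg _) m)) hIn_nonneg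
    have hIq_zero : (∫ y in D, |z t1 y|^(q-1) * z t1 y) = 0 := by
      have hsimp : k * exp ((p-1)*η*β t1) * (|(0:ℝ)|^(p-1) * 0) = 0 := by ring
      have hγ0 : γ * (0:ℝ) = 0 := by ring
      have hle : exp ((q-1)*η*β t1) * (∫ y in D, |z t1 y|^(q-1) * z t1 y) ≤ 0 := by
        rw [hγ0, hsimp] at hpde
        linarith only [hpde, hdle, hlap1, hdel]
      have h2 : exp ((q-1)*η*β t1) * (∫ y in D, |z t1 y|^(q-1) * z t1 y)
          ≤ exp ((q-1)*η*β t1) * 0 := by rw [mul_zero]; exact hle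
      have := (mul_le_mul_iff_right₀ hA1).mp h2
      exact le_antisymm this hIq_nonneg
    -- continuity forces z t1 x2 = 0
    by_contra hne
    have hpos2 : 0 < z t1 x2 :=
      lt_of_le_of_ne (key t1 ht1I x2 (subset_closure hx2)) (Ne.symm hne)
    have hcont2 : ContinuousOn (z t1) D := (hslice t1 ht1I).mono subset_closure
    have hopen2 : IsOpen (D ∩ (z t1)⁻¹' (Ioi (z t1 x2 / 2))) :=
      hcont2.isOpen_inter_preimage hDopen isOpen_Ioi
    have hx2mem : x2 ∈ D ∩ (z t1)⁻¹' (Ioi (z t1 x2 / 2)) := by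
      refine ⟨hx2, ?_⟩
      simp only [mem_preimage, mem_Ioi]
      linarith only [hpos2]
    obtain ⟨ρ, hρ0, hρball⟩ := Metric.isOpen_iff.mp hopen2 x2 hx2mem
    have hsubset : Metric.ball x2 ρ ⊆ D := fun y hy => (hρball hy).1
    set c2 := z t1 x2 / 2 with hc2def
    have hc2pos : 0 < c2 := by rw [hc2def]; linarith only [hpos2]
    have hint := hInt t1 ht1I (q-1) (by linarith only [hq])
    have hlower : ∀ y ∈ Metric.ball x2 ρ, c2^(q-1) * c2 ≤ |z t1 y|^(q-1) * z t1 y := by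
      intro y hy
      have hyv : c2 < z t1 y := (hρball hy).2
      have h0 : 0 ≤ z t1 y := key t1 ht1I y (subset_closure (hsubset hy))
      rw [abs_of_nonneg h0]
      exact mul_le_mul (Real.rpow_le_rpow hc2pos.le hyv.le (by linarith only [hq]))
        hyv.le hc2pos.le (Real.rpow_nonneg h0 _)
    have hvol : 0 < (volume (Metric.ball x2 ρ)).toReal := by
      rw [ENNReal.toReal_pos_iff]
      exact ⟨Metric.measure_ball_pos volume x2 hρ0, measure_ball_lt_top⟩
    have hball_int : IntegrableOn (fun y => |z t1 y|^(q-1) * z t1 y)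
        (Metric.ball x2 ρ) volume := hint.mono_set hsubset
    have hconst_int : IntegrableOn (fun _ : EuclideanSpace ℝ (Fin d) => c2^(q-1) * c2)
        (Metric.ball x2 ρ) volume := integrableOn_const measure_ball_lt_top.ne
    have h2 : c2^(q-1) * c2 * (volume (Metric.ball x2 ρ)).toReal
        ≤ ∫ y in Metric.ball x2 ρ, |z t1 y|^(q-1) * z t1 y := by
      calc c2^(q-1) * c2 * (volume (Metric.ball x2 ρ)).toReal
          = ∫ _y in Metric.ball x2 ρ, c2^(q-1) * c2 := by
            rw [setIntegral_const, smul_eq_mul, measureReal_def]; ring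
      _ ≤ _ := setIntegral_mono_on hconst_int hball_int measurableSet_ball hlower
    have h3 : (∫ y in Metric.ball x2 ρ, |z t1 y|^(q-1) * z t1 y)
        ≤ ∫ y in D, |z t1 y|^(q-1) * z t1 y := by
      apply setIntegral_mono_set hint
      · refine (ae_restrict_iff' hDmeas).mpr (ae_of_all _ fun y hy => ?_)
        exact mul_nonneg (Real.rpow_nonneg (abs_nonneg _) _)
          (key t1 ht1I y (subset_closure hy))
      · exact HasSubset.Subset.eventuallyLE hsubset
    have h4 : 0 < c2^(q-1) * c2 * (volume (Metric.ball x2 ρ)).toReal := by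
      have := Real.rpow_pos_of_pos hc2pos (q-1)
      positivity
    rw [hIq_zero] at h3
    linarith only [h2, h3, h4]
  -- strict positivity
  intro hfne t1 ht1 x1 hx1
  push_neg at hfne
  obtain ⟨x0, hx0D, hfx0ne⟩ := hfne
  have hz00 : 0 < z 0 x0 := by
    rw [hz_init x0 hx0D]
    exact lt_of_le_of_ne (hf_nn x0 hx0D) (Ne.symm hfx0ne)
  set ε := z 0 x0 / 2 with hεdef
  have hε : 0 < ε := by rw [hεdef]; linarith only [hz00]
  have hcont0 : ContinuousOn (z 0) D := (hslice 0 h0T).mono subset_closure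
  have hopen0 : IsOpen (D ∩ (z 0)⁻¹' (Ioi ε)) :=
    hcont0.isOpen_inter_preimage hDopen isOpen_Ioi
  have hx0mem : x0 ∈ D ∩ (z 0)⁻¹' (Ioi ε) := by
    refine ⟨hx0D, ?_⟩
    simp only [mem_preimage, mem_Ioi]
    rw [hεdef]; linarith only [hz00]
  obtain ⟨r2, hr2, hball2⟩ := Metric.isOpen_iff.mp hopen0 x0 hx0mem
  set r := r2/2 with hrdef
  have hr0 : 0 < r := by rw [hrdef]; linarith only [hr2]
  have hcb : Metric.closedBall x0 r ⊆ Metric.ball x0 r2 :=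
    Metric.closedBall_subset_ball (by rw [hrdef]; linarith only [hr2])
  have hcbD : Metric.closedBall x0 r ⊆ D := fun y hy => (hball2 (hcb hy)).1
  have hballD : Metric.ball x0 r ⊆ D := fun y hy => hcbD (Metric.ball_subset_closedBall hy)
  have hcbz : ∀ y ∈ Metric.closedBall x0 r, ε ≤ z 0 y := fun y hy => ((hball2 (hcb hy)).2).le
  have hx0cl : x0 ∈ closure D := subset_closure hx0D
  have hN0 : 0 < N := lt_of_lt_of_le (lt_of_lt_of_le hz00 (le_abs_self _)) (hN 0 h0T x0 hx0cl)
  set c := k * Ep' * N^(p-1) with hcdef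
  have hNp : 0 < N^(p-1) := Real.rpow_pos_of_pos hN0 _
  have hcpos : 0 < c := by rw [hcdef]; exact mul_pos (mul_pos hk hEp0) hNp
  have hr2pos : (0:ℝ) < r^2 := by positivity
  set α0 := 4*(d:ℝ)*((d:ℝ)+2)/r^2 with hα0def
  have hα0nn : 0 ≤ α0 := by rw [hα0def]; positivity
  have hα0r : α0 * r^2 = 4*(d:ℝ)*((d:ℝ)+2) := by rw [hα0def]; field_simp
  set α := α0 + c with hαdef
  have hRK0 : 0 < (r^2)^(d+2) := by positivity
  set A0 := ε / (r^2)^(d+2) with hA0def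
  have hA00 : 0 < A0 := by rw [hA0def]; positivity
  -- comparison with barrier on the cylinder
  have hcomp : ∀ t ∈ Icc 0 T, ∀ y ∈ Metric.closedBall x0 r,
      (A0 * exp (-(α*t))) * (r^2 - ‖y - x0‖^2)^(d+2) ≤ z t y := by
    have hK2c : IsCompact (Icc (0:ℝ) T ×ˢ Metric.closedBall x0 r) :=
      isCompact_Icc.prod (isCompact_closedBall x0 r)
    have hK2ne : (Icc (0:ℝ) T ×ˢ Metric.closedBall x0 r).Nonempty :=
      ⟨(0, x0), ⟨h0T, Metric.mem_closedBall_self hr0.le⟩⟩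
    set w2 : ℝ × EuclideanSpace ℝ (Fin d) → ℝ :=
      fun pr => z pr.1 pr.2 - (A0 * exp (-(α*pr.1))) * (r^2 - ‖pr.2 - x0‖^2)^(d+2) with hw2def
    have hvcont : Continuous (fun pr : ℝ × EuclideanSpace ℝ (Fin d) =>
        (A0 * exp (-(α*pr.1))) * (r^2 - ‖pr.2 - x0‖^2)^(d+2)) := by
      apply Continuous.mul
      · exact continuous_const.mul
          (Real.continuous_exp.comp ((continuous_const.mul continuous_fst).neg))
      · exact (continuous_const.sub
          (((continuous_snd.sub continuous_const).norm.pow 2))).pow _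
    have hsubK : Icc (0:ℝ) T ×ˢ Metric.closedBall x0 r ⊆ Icc 0 T ×ˢ closure D :=
      Set.prod_mono (subset_refl _) (fun y hy => subset_closure (hcbD hy))
    have hw2cont : ContinuousOn w2 (Icc (0:ℝ) T ×ˢ Metric.closedBall x0 r) :=
      (hz_cont.mono hsubK).sub hvcont.continuousOn
    obtain ⟨⟨t2, x2⟩, hP2mem, hP2min⟩ := hK2c.exists_isMinOn hK2ne hw2cont
    obtain ⟨ht2I, hx2cb⟩ := hP2mem
    have hminall2 : ∀ s ∈ Icc (0:ℝ) T, ∀ y ∈ Metric.closedBall x0 r,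
        w2 (t2, x2) ≤ w2 (s, y) := fun s hs y hy =>
      hP2min (show ((s,y) : ℝ × EuclideanSpace ℝ (Fin d)) ∈ _ from ⟨hs, hy⟩)
    rcases le_or_gt 0 (w2 (t2, x2)) with hge | hneg
    · intro t ht y hy
      have h1 := hminall2 t ht y hy
      have h2 : 0 ≤ w2 (t, y) := le_trans hge h1
      have h3 : w2 (t, y) = z t y - (A0 * exp (-(α*t))) * (r^2 - ‖y - x0‖^2)^(d+2) := rfl
      rw [h3] at h2
      linarith only [h2]
    exfalso
    have hx2r : ‖x2 - x0‖ ≤ r := mem_closedBall_iff_norm.mp hx2cb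
    have hψ2nn : 0 ≤ r^2 - ‖x2 - x0‖^2 := by
      nlinarith only [hx2r, norm_nonneg (x2 - x0), hr0]
    have hx2cl : x2 ∈ closure D := subset_closure (hcbD hx2cb)
    have ht2pos : 0 < t2 := by
      rcases eq_or_lt_of_le ht2I.1 with he | h
      · exfalso
        have he' : (0:ℝ) = t2 := he
        have hψub : (r^2 - ‖x2-x0‖^2)^(d+2) ≤ (r^2)^(d+2) := by
          apply pow_le_pow_left₀ hψ2nn
          linarith only [sq_nonneg ‖x2 - x0‖]
        have hv_le : (A0 * exp (-(α*0))) * (r^2 - ‖x2-x0‖^2)^(d+2) ≤ ε := by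
          rw [mul_zero, neg_zero, exp_zero, mul_one]
          calc A0 * (r^2-‖x2-x0‖^2)^(d+2) ≤ A0 * (r^2)^(d+2) :=
                mul_le_mul_of_nonneg_left hψub hA00.le
          _ = ε := by rw [hA0def]; field_simp
        have hz_ge : ε ≤ z 0 x2 := hcbz x2 hx2cb
        have hw20 : w2 (0, x2)
            = z 0 x2 - (A0 * exp (-(α*0))) * (r^2 - ‖x2 - x0‖^2)^(d+2) := rfl
        rw [← he'] at hneg
        rw [hw20] at hneg
        linarith only [hneg, hv_le, hz_ge]
      · exact h
    have ht2Ioc : t2 ∈ Ioc 0 T := ⟨ht2pos, ht2I.2⟩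
    have hz2nn : 0 ≤ z t2 x2 := key t2 ht2I x2 hx2cl
    have hWrfl : w2 (t2, x2)
        = z t2 x2 - (A0 * exp (-(α*t2))) * (r^2 - ‖x2 - x0‖^2)^(d+2) := rfl
    rw [hWrfl] at hneg
    have hx2ball : x2 ∈ Metric.ball x0 r := by
      rcases lt_or_eq_of_le hx2r with hlt | heq
      · exact mem_ball_iff_norm.mpr hlt
      · exfalso
        have hψ0 : r^2 - ‖x2-x0‖^2 = 0 := by rw [heq]; ring
        rw [hψ0, zero_pow (by omega : d+2 ≠ 0), mul_zero] at hneg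
        linarith only [hneg, hz2nn]
    have hx2D : x2 ∈ D := hballD hx2ball
    -- time derivative at the minimum
    have hvder : HasDerivAt (fun s : ℝ => (A0 * exp (-(α*s))) * (r^2 - ‖x2 - x0‖^2)^(d+2))
        (-(α * ((A0 * exp (-(α*t2))) * (r^2 - ‖x2 - x0‖^2)^(d+2)))) t2 := by
      have h0 : HasDerivAt (fun s : ℝ => -(α*s)) (-α) t2 := by
        exact ((hasDerivAt_id t2).const_mul α).neg.congr_deriv (by simp)
      have h1 : HasDerivAt (fun s : ℝ => exp (-(α*s))) (-α * exp (-(α*t2))) t2 := by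
        simpa [mul_comm] using h0.exp
      have h2 := (h1.const_mul A0).mul_const ((r^2 - ‖x2 - x0‖^2)^(d+2))
      exact h2.congr_deriv (by ring)
    have hwder : HasDerivAt
        (fun s => z s x2 - (A0 * exp (-(α*s))) * (r^2 - ‖x2 - x0‖^2)^(d+2))
        (zt t2 x2 - (-(α * ((A0 * exp (-(α*t2))) * (r^2 - ‖x2 - x0‖^2)^(d+2))))) t2 :=
      (hz_t t2 ht2Ioc x2 hx2D).sub hvder
    have hwder_le : zt t2 x2
        - (-(α * ((A0 * exp (-(α*t2))) * (r^2 - ‖x2 - x0‖^2)^(d+2)))) ≤ 0 := by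
      apply deriv_nonpos_of_left_min hwder
      filter_upwards [Ioo_mem_nhdsLT_of_mem
        (⟨ht2pos, le_refl t2⟩ : t2 ∈ Ioc 0 t2)] with s hs
      have h1 := hminall2 s ⟨hs.1.le, hs.2.le.trans ht2I.2⟩ x2 hx2cb
      have h2 : w2 (s, x2)
          = z s x2 - (A0 * exp (-(α*s))) * (r^2 - ‖x2 - x0‖^2)^(d+2) := rfl
      rw [hWrfl, h2] at h1
      exact h1
    -- laplacian at the minimum
    have hvCD : ContDiff ℝ 2 (fun y : EuclideanSpace ℝ (Fin d) =>
        (A0 * exp (-(α*t2))) * (r^2 - ‖y - x0‖^2)^(d+2)) :=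
      contDiff_const.mul (barrier_contDiff x0 r (d+2))
    have hzCD := hz_x t2 ht2Ioc
    have hwCD : ContDiffOn ℝ 2
        (fun y => z t2 y - (A0 * exp (-(α*t2))) * (r^2 - ‖y - x0‖^2)^(d+2))
        (Metric.ball x0 r) := (hzCD.mono hballD).sub hvCD.contDiffOn
    have hlapw : 0 ≤ laplacian
        (fun y => z t2 y - (A0 * exp (-(α*t2))) * (r^2 - ‖y - x0‖^2)^(d+2)) x2 := by
      apply laplacian_nonneg_of_min Metric.isOpen_ball hx2ball hwCD
      intro y hy
      have h1 := hminall2 t2 ht2I y (Metric.ball_subset_closedBall hy)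
      have h2 : w2 (t2, y)
          = z t2 y - (A0 * exp (-(α*t2))) * (r^2 - ‖y - x0‖^2)^(d+2) := rfl
      rw [hWrfl, h2] at h1
      exact h1
    have hlapsub : laplacian
        (fun y => z t2 y - (A0 * exp (-(α*t2))) * (r^2 - ‖y - x0‖^2)^(d+2)) x2
        = laplacian (z t2) x2
          - laplacian (fun y => (A0 * exp (-(α*t2))) * (r^2 - ‖y - x0‖^2)^(d+2)) x2 :=
      laplacian_sub hDopen hx2D hzCD hvCD
    have hlapv : laplacian
        (fun y => (A0 * exp (-(α*t2))) * (r^2 - ‖y - x0‖^2)^(d+2)) x2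
        = (A0 * exp (-(α*t2)))
          * laplacian (fun y => (r^2 - ‖y - x0‖^2)^(d+2)) x2 :=
      laplacian_const_mul _ (barrier_contDiff x0 r (d+2)) x2
    have hx2norm : ‖x2 - x0‖ < r := mem_ball_iff_norm.mp hx2ball
    have hbar := laplacian_barrier_ge hd x0 x2 hr0 hx2norm
    have hlapG_ge : -(α0 * (r^2 - ‖x2 - x0‖^2)^(d+2))
        ≤ laplacian (fun y : EuclideanSpace ℝ (Fin d) => (r^2 - ‖y - x0‖^2)^(d+2)) x2 := by
      have h6 : r^2 * (α0 * (r^2 - ‖x2 - x0‖^2)^(d+2))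
          = 4*(d:ℝ)*((d:ℝ)+2) * (r^2 - ‖x2 - x0‖^2)^(d+2) := by rw [← hα0r]; ring
      by_contra hno
      push_neg at hno
      have h7 : r^2 * laplacian (fun y : EuclideanSpace ℝ (Fin d)
          => (r^2 - ‖y - x0‖^2)^(d+2)) x2
          < r^2 * (-(α0 * (r^2 - ‖x2 - x0‖^2)^(d+2))) :=
        (mul_lt_mul_iff_right₀ hr2pos).mpr hno
      linarith only [hbar, h6, h7]
    -- PDE lower bound at the minimum
    have hpde := hz_pde t2 ht2Ioc x2 hx2D
    have hIq2 : 0 ≤ ∫ y in D, |z t2 y|^(q-1) * z t2 y :=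
      setIntegral_nonneg hDmeas (fun y hy =>
        mul_nonneg (Real.rpow_nonneg (abs_nonneg _) _) (key t2 ht2I y (subset_closure hy)))
    have hIn2 : 0 ≤ ∫ y in D, |z t2 y|^(n-1) * z t2 y :=
      setIntegral_nonneg hDmeas (fun y hy =>
        mul_nonneg (Real.rpow_nonneg (abs_nonneg _) _) (key t2 ht2I y (subset_closure hy)))
    have hγ2 : 0 ≤ γ * z t2 x2 := mul_nonneg hγ hz2nn
    have hAq2 : 0 ≤ exp ((q-1)*η*β t2) * (∫ y in D, |z t2 y|^(q-1) * z t2 y) :=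
      mul_nonneg (exp_pos _).le hIq2
    have hδ2 : 0 ≤ δ * exp ((m+n-1)*η*β t2) * |z t2 x2|^m
        * (∫ y in D, |z t2 y|^(n-1) * z t2 y) :=
      mul_nonneg (mul_nonneg (mul_nonneg hδ (exp_pos _).le)
        (Real.rpow_nonneg (abs_nonneg _) m)) hIn2
    have hkterm : k * exp ((p-1)*η*β t2) * (|z t2 x2|^(p-1) * z t2 x2) ≤ c * z t2 x2 := by
      have h1 : |z t2 x2|^(p-1) ≤ N^(p-1) :=
        Real.rpow_le_rpow (abs_nonneg _) (hN t2 ht2I x2 hx2cl) (by linarith only [hp])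
      have h2 : exp ((p-1)*η*β t2) ≤ Ep' := hEp t2 ht2I
      have h3 : k * exp ((p-1)*η*β t2) * |z t2 x2|^(p-1) ≤ k * Ep' * N^(p-1) := by
        apply mul_le_mul (mul_le_mul le_rfl h2 (exp_pos _).le hk.le) h1
          (Real.rpow_nonneg (abs_nonneg _) _) (by positivity)
      calc k * exp ((p-1)*η*β t2) * (|z t2 x2|^(p-1) * z t2 x2)
          = (k * exp ((p-1)*η*β t2) * |z t2 x2|^(p-1)) * z t2 x2 := by ring
      _ ≤ (k * Ep' * N^(p-1)) * z t2 x2 := mul_le_mul_of_nonneg_right h3 hz2nn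
      _ = c * z t2 x2 := by rw [hcdef]
    have hzt_ge : laplacian (z t2) x2 - c * z t2 x2 ≤ zt t2 x2 := by
      rw [hpde]
      linarith only [hγ2, hAq2, hδ2, hkterm]
    -- assemble the contradiction
    have hlapv_ge : (A0 * exp (-(α*t2))) * (-(α0 * (r^2 - ‖x2 - x0‖^2)^(d+2)))
        ≤ (A0 * exp (-(α*t2)))
          * laplacian (fun y : EuclideanSpace ℝ (Fin d) => (r^2 - ‖y - x0‖^2)^(d+2)) x2 :=
      mul_le_mul_of_nonneg_left hlapG_ge (mul_nonneg hA00.le (exp_pos _).le)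
    have hlast : 0 < c * ((A0 * exp (-(α*t2))) * (r^2 - ‖x2 - x0‖^2)^(d+2) - z t2 x2) :=
      mul_pos hcpos (by linarith only [hneg])
    rw [hαdef] at hwder_le
    linarith only [hwder_le, hzt_ge, hlapsub, hlapv, hlapw, hlapv_ge, hlast]
  -- conclude strict positivity
  have hzx0pos : ∀ t ∈ Icc 0 T, 0 < z t x0 := by
    intro t ht
    have h1 := hcomp t ht x0 (Metric.mem_closedBall_self hr0.le)
    have h2 : ‖x0 - x0‖ = 0 := by simp
    rw [h2] at h1
    have h4 : (r^2 - 0^2 : ℝ) = r^2 := by ring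
    rw [h4] at h1
    have h3 : 0 < (A0 * exp (-(α*t))) * (r^2)^(d+2) :=
      mul_pos (mul_pos hA00 (exp_pos _)) (by positivity)
    linarith only [h1, h3]
  rcases eq_or_lt_of_le (key t1 ⟨ht1.1.le, ht1.2⟩ x1 (subset_closure hx1)) with heq | hlt
  · exfalso
    have h1 := hspread t1 ht1 x1 hx1 heq.symm x0 hx0D
    have h2 := hzx0pos t1 ⟨ht1.1.le, ht1.2⟩
    linarith only [h1, h2]
  · exact hlt
end

section
/- Let T ∈ (0,∞], let h : [0,T) → [0,∞) be continuous, let α ∈ ℝ, Ñ > 0, and μ > 1. Let J : [0,T) → ℝ be differentiable with J(t) > 0 for all t ∈ [0,T), satisfying J'(t) ≥ α·J(t) + Ñ·h(t)·J(t)^μ for all t ∈ [0,T). Then for every t ∈ [0,T): Ñ·(μ−1)·∫₀^t h(s)·e^{α(μ−1)s} ds < J(0)^{1−μ}. In particular, if τ* = inf{ t ≥ 0 : ∫₀^t h(s)e^{α(μ−1)s} ds ≥ J(0)^{1−μ}/(Ñ(μ−1)) }, then T ≤ τ*. -/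
open MeasureTheory Real Set

/-- Finite-time blow-up bound for positive supersolutions of the Bernoulli-type ODE
`J' = α J + Ñ h(t) J^μ` on `[0,T)` with `T ∈ (0,∞]` (modelled as `T : EReal`).
The second conjunct states `T ≤ τ*` where
`τ* = inf { t ≥ 0 : ∫₀^t h(s)e^{α(μ−1)s} ds ≥ J(0)^{1−μ}/(Ñ(μ−1)) }`. -/
theorem statement6 (T : EReal) (hT : 0 < T)
    (h : ℝ → ℝ) (α N μ : ℝ) (hN : 0 < N) (hμ : 1 < μ)
    -- `h : [0,T) → [0,∞)` is continuous
    (hh_cont : ContinuousOn h {t : ℝ | 0 ≤ t ∧ (t : EReal) < T})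
    (hh_nn : ∀ t : ℝ, 0 ≤ t → (t : EReal) < T → 0 ≤ h t)
    (J J' : ℝ → ℝ)
    -- `J` is differentiable and positive on `[0,T)`
    (hJpos : ∀ t : ℝ, 0 ≤ t → (t : EReal) < T → 0 < J t)
    (hJd : ∀ t : ℝ, 0 ≤ t → (t : EReal) < T → HasDerivAt J (J' t) t)
    -- the differential inequality
    (hJineq : ∀ t : ℝ, 0 ≤ t → (t : EReal) < T →
      α * J t + N * h t * J t ^ μ ≤ J' t) :
    (∀ t : ℝ, 0 ≤ t → (t : EReal) < T →
      N * (μ - 1) * ∫ s in (0:ℝ)..t, h s * exp (α * (μ - 1) * s) < J 0 ^ (1 - μ)) ∧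
    (∀ t : ℝ, 0 ≤ t →
      J 0 ^ (1 - μ) / (N * (μ - 1)) ≤ ∫ s in (0:ℝ)..t, h s * exp (α * (μ - 1) * s) →
      T ≤ (t : EReal)) := by
  have hμ1 : (0 : ℝ) < μ - 1 := by linarith
  have key : ∀ t : ℝ, 0 ≤ t → (t : EReal) < T →
      N * (μ - 1) * ∫ s in (0:ℝ)..t, h s * exp (α * (μ - 1) * s) < J 0 ^ (1 - μ) := by
    intro t ht htT
    set g : ℝ → ℝ := fun s => h s * exp (α * (μ - 1) * s) with hgdef
    set φ : ℝ → ℝ := fun s =>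
      J s ^ (1 - μ) * exp (α * (μ - 1) * s) + N * (μ - 1) * ∫ x in (0:ℝ)..s, g x with hφdef
    have hsubS : Icc (0:ℝ) t ⊆ {u : ℝ | 0 ≤ u ∧ (u : EReal) < T} := by
      intro u hu
      exact ⟨hu.1, lt_of_le_of_lt (by exact_mod_cast hu.2) htT⟩
    have hmemS : ∀ u ∈ Icc (0:ℝ) t, 0 ≤ u ∧ (u : EReal) < T := fun u hu => hsubS hu
    have hg_cont : ContinuousOn g {u : ℝ | 0 ≤ u ∧ (u : EReal) < T} :=
      hh_cont.mul ((continuous_exp.comp (continuous_const.mul continuous_id)).continuousOn)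
    have hg_contIcc : ContinuousOn g (Icc 0 t) := hg_cont.mono hsubS
    have hg_int : IntegrableOn g (uIcc 0 t) := by
      rw [uIcc_of_le ht]
      exact hg_contIcc.integrableOn_compact isCompact_Icc
    -- continuity of φ on Icc 0 t
    have hφ_cont : ContinuousOn φ (Icc 0 t) := by
      apply ContinuousOn.add
      · apply ContinuousOn.mul
        · intro u hu
          have hu' := hmemS u hu
          exact ((hJd u hu'.1 hu'.2).continuousAt.continuousWithinAt).rpow_const
            (Or.inl (ne_of_gt (hJpos u hu'.1 hu'.2)))
        · exact (continuous_exp.comp (continuous_const.mul continuous_id)).continuousOn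
      · apply continuousOn_const.mul
        have := intervalIntegral.continuousOn_primitive_interval (μ := volume)
          (a := (0:ℝ)) (b := t) (f := g) hg_int
        rwa [uIcc_of_le ht] at this
    -- derivative bound on the interior
    have hderiv : ∀ s ∈ Ioo (0:ℝ) t, HasDerivAt φ
        ((1 - μ) * J s ^ (1 - μ - 1) * J' s * exp (α * (μ - 1) * s)
          + J s ^ (1 - μ) * (exp (α * (μ - 1) * s) * (α * (μ - 1)))
          + N * (μ - 1) * g s) s := by
      intro s hs
      have hs' : 0 ≤ s ∧ (s : EReal) < T := hmemS s ⟨le_of_lt hs.1, le_of_lt hs.2⟩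
      have hJs : HasDerivAt J (J' s) s := hJd s hs'.1 hs'.2
      have h1 : HasDerivAt (fun u => J u ^ (1 - μ))
          ((1 - μ) * J s ^ (1 - μ - 1) * J' s) s := by
        have := hJs.rpow_const (p := 1 - μ) (Or.inl (ne_of_gt (hJpos s hs'.1 hs'.2)))
        convert this using 1
        ring
      have h2 : HasDerivAt (fun u => exp (α * (μ - 1) * u))
          (exp (α * (μ - 1) * s) * (α * (μ - 1))) s := by
        simpa using ((hasDerivAt_id s).const_mul (α * (μ - 1))).exp
      have h3 : HasDerivAt (fun u => ∫ x in (0:ℝ)..u, g x) (g s) s := by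
        apply intervalIntegral.integral_hasDerivAt_right
        · exact (hg_contIcc.mono (by
            rw [uIcc_of_le hs'.1]
            exact Icc_subset_Icc le_rfl (le_of_lt hs.2))).intervalIntegrable
        · exact (hg_cont.mono (fun u hu => hsubS ⟨le_of_lt hu.1, le_of_lt hu.2⟩)).stronglyMeasurableAtFilter
            isOpen_Ioo s hs
        · exact (hg_cont.mono (fun u hu => hsubS ⟨le_of_lt hu.1, le_of_lt hu.2⟩)).continuousAt
            (isOpen_Ioo.mem_nhds hs)
      exact (h1.mul h2).add (h3.const_mul (N * (μ - 1)))
    have hderiv_nonpos : ∀ s ∈ Ioo (0:ℝ) t,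
        (1 - μ) * J s ^ (1 - μ - 1) * J' s * exp (α * (μ - 1) * s)
          + J s ^ (1 - μ) * (exp (α * (μ - 1) * s) * (α * (μ - 1)))
          + N * (μ - 1) * g s ≤ 0 := by
      intro s hs
      have hs' : 0 ≤ s ∧ (s : EReal) < T := hmemS s ⟨le_of_lt hs.1, le_of_lt hs.2⟩
      have hJsp : 0 < J s := hJpos s hs'.1 hs'.2
      have hPpos : 0 < J s ^ (1 - μ - 1) := Real.rpow_pos_of_pos hJsp _
      have hEpos : 0 < exp (α * (μ - 1) * s) := exp_pos _
      have hineq := hJineq s hs'.1 hs'.2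
      have hmul : (μ - 1) * (J s ^ (1 - μ - 1) * exp (α * (μ - 1) * s))
            * (α * J s + N * h s * J s ^ μ)
          ≤ (μ - 1) * (J s ^ (1 - μ - 1) * exp (α * (μ - 1) * s)) * J' s :=
        mul_le_mul_of_nonneg_left hineq (by positivity)
      have hP1 : J s ^ (1 - μ - 1) * J s = J s ^ (1 - μ) := by
        rw [← Real.rpow_add_one (ne_of_gt hJsp)]
        ring_nf
      have hP2 : J s ^ (1 - μ - 1) * J s ^ μ = 1 := by
        rw [← Real.rpow_add hJsp]
        norm_num
      have hexpand : (μ - 1) * (J s ^ (1 - μ - 1) * exp (α * (μ - 1) * s))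
            * (α * J s + N * h s * J s ^ μ)
          = α * (μ - 1) * (J s ^ (1 - μ - 1) * J s) * exp (α * (μ - 1) * s)
            + N * (μ - 1) * h s * ((J s ^ (1 - μ - 1) * J s ^ μ) * exp (α * (μ - 1) * s)) := by
        ring
      rw [hP1, hP2] at hexpand
      simp only [hgdef]
      nlinarith [hmul, hexpand]
    -- antitone on Icc 0 t
    have hanti : AntitoneOn φ (Icc 0 t) := by
      apply antitoneOn_of_deriv_nonpos (convex_Icc 0 t) hφ_cont
      · rw [interior_Icc]
        exact fun s hs => ((hderiv s hs).differentiableAt).differentiableWithinAt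
      · rw [interior_Icc]
        intro s hs
        rw [(hderiv s hs).deriv]
        exact hderiv_nonpos s hs
    have hφt : φ t ≤ φ 0 := hanti (left_mem_Icc.mpr ht) (right_mem_Icc.mpr ht) ht
    have hφ0 : φ 0 = J 0 ^ (1 - μ) := by
      simp [hφdef]
    have hJt : 0 < J t ^ (1 - μ) * exp (α * (μ - 1) * t) := by
      have := hJpos t ht htT
      positivity
    have : N * (μ - 1) * (∫ x in (0:ℝ)..t, g x) < φ t := by
      simp only [hφdef]
      linarith
    calc N * (μ - 1) * ∫ s in (0:ℝ)..t, h s * exp (α * (μ - 1) * s)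
        = N * (μ - 1) * ∫ x in (0:ℝ)..t, g x := rfl
      _ < φ t := this
      _ ≤ φ 0 := hφt
      _ = J 0 ^ (1 - μ) := hφ0
  refine ⟨key, ?_⟩
  intro t ht hint
  by_contra hTt
  have htT : (t : EReal) < T := lt_of_not_ge hTt
  have hk := key t ht htT
  have hNμ : 0 < N * (μ - 1) := by positivity
  rw [div_le_iff₀ hNμ] at hint
  linarith [hint, hk]
end

section
/- Let D ⊂ ℝ^d be a measurable set with Lebesgue measure |D| satisfying 0 < |D| < ∞. Let k > 0, δ ≥ 0, η ≥ 0, λ₁ > 0 be constants and let p, q, n > 1 and m ≥ 0 be exponents with m + n ≥ q ≥ p. Let φ : D → ℝ be measurable with 0 ≤ φ(x) ≤ C₁ for all x ∈ D, ∫_D φ(y) dy = 1, and with φ^q and φ^n integrable on D. Let B* ≥ 0 and b > 1 satisfy b^{q−p}·e^{−η(m+n−1)B*} ≥ (k·C₁^p + λ₁·C₁)·|D|^{q−1}. Then for every r ∈ ℝ with |r| ≤ B* and every x ∈ D: e^{(q−1)ηr}·b^q·∫_D φ(y)^q dy − k·e^{(p−1)ηr}·b^p·φ(x)^p + δ·e^{(m+n−1)ηr}·b^{m+n}·φ(x)^m·∫_D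 φ(y)^n dy ≥ λ₁·b·φ(x). -/
open MeasureTheory Real Set

set_option maxHeartbeats 1000000

/-- The pointwise inequality showing that `b·φ` is a subsolution of the transformed
PDE (first step in the upper-bound Theorem 5.1, using the first condition of (B1)). -/
theorem statement9 {d : ℕ} (D : Set (EuclideanSpace ℝ (Fin d)))
    (hDmeas : MeasurableSet D) (hD0 : 0 < volume D) (hDfin : volume D < ⊤)
    (k δ η lam1 : ℝ) (hk : 0 < k) (hδ : 0 ≤ δ) (hη : 0 ≤ η) (hlam : 0 < lam1)
    (p q n m : ℝ) (hp : 1 < p) (hq : 1 < q) (hn : 1 < n) (hm : 0 ≤ m)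
    (hpq : p ≤ q) (hqmn : q ≤ m + n)
    (φ : EuclideanSpace ℝ (Fin d) → ℝ) (hφmeas : Measurable φ)
    (C₁ : ℝ) (hφ_bds : ∀ x ∈ D, 0 ≤ φ x ∧ φ x ≤ C₁)
    (hφ_int : (∫ y in D, φ y) = 1)
    (hφq : IntegrableOn (fun y => φ y ^ q) D)
    (hφn : IntegrableOn (fun y => φ y ^ n) D)
    (Bstar b : ℝ) (hBstar : 0 ≤ Bstar) (hb : 1 < b)
    -- the first condition of (B1)
    (hcond : (k * C₁ ^ p + lam1 * C₁) * (volume D).toReal ^ (q - 1)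
      ≤ b ^ (q - p) * exp (-(η * (m + n - 1) * Bstar))) :
    ∀ r : ℝ, |r| ≤ Bstar → ∀ x ∈ D,
      lam1 * b * φ x ≤
        exp ((q - 1) * η * r) * b ^ q * (∫ y in D, φ y ^ q)
          - k * exp ((p - 1) * η * r) * b ^ p * φ x ^ p
          + δ * exp ((m + n - 1) * η * r) * b ^ (m + n) * φ x ^ m
              * (∫ y in D, φ y ^ n) := by
  intro r hr x hx
  obtain ⟨hφ0, hφC⟩ := hφ_bds x hx
  have hb0 : (0:ℝ) < b := by linarith
  have hC0 : 0 ≤ C₁ := hφ0.trans hφC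
  have hμ0 : 0 < (volume D).toReal := ENNReal.toReal_pos hD0.ne' hDfin.ne
  set μD : ℝ := (volume D).toReal with hμDdef
  set Iq : ℝ := ∫ y in D, φ y ^ q with hIqdef
  -- integrability of φ on D
  have hφint : IntegrableOn φ D :=
    Measure.integrableOn_of_bounded hDfin.ne hφmeas.aestronglyMeasurable
      ((ae_restrict_mem hDmeas).mono fun y hy => by
        rw [Real.norm_eq_abs, abs_of_nonneg (hφ_bds y hy).1]; exact (hφ_bds y hy).2)
  -- Jensen: (⨍ φ)^q ≤ ⨍ φ^q
  have hjensen : (⨍ y in D, φ y) ^ q ≤ ⨍ y in D, φ y ^ q := by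
    have hconv : ConvexOn ℝ (Ici (0:ℝ)) fun x : ℝ => x ^ q := convexOn_rpow hq.le
    have hcont : ContinuousOn (fun x : ℝ => x ^ q) (Ici 0) := fun y _ =>
      (Real.continuousAt_rpow_const y q (Or.inr (by linarith))).continuousWithinAt
    exact hconv.map_set_average_le hcont isClosed_Ici hD0.ne' hDfin.ne
      ((ae_restrict_mem hDmeas).mono fun y hy => (hφ_bds y hy).1) hφint hφq
  -- hence 1 ≤ μD^(q-1) * Iq
  have hIq0 : 0 ≤ Iq :=
    setIntegral_nonneg hDmeas fun y hy => Real.rpow_nonneg (hφ_bds y hy).1 q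
  have hJ : 1 ≤ μD ^ (q - 1) * Iq := by
    have havg : (⨍ y in D, φ y) = μD⁻¹ := by
      rw [setAverage_eq, hφ_int, smul_eq_mul, mul_one]; rfl
    have havgq : (⨍ y in D, φ y ^ q) = μD⁻¹ * Iq := by
      rw [setAverage_eq, smul_eq_mul]; rfl
    rw [havg, havgq] at hjensen
    have hinv : (μD⁻¹) ^ q = μD ^ (-q) := by
      rw [Real.rpow_neg hμ0.le, ← Real.inv_rpow hμ0.le]
    rw [hinv] at hjensen
    have := mul_le_mul_of_nonneg_left hjensen (Real.rpow_nonneg hμ0.le q)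
    calc (1:ℝ) = μD ^ q * μD ^ (-q) := by
              rw [← Real.rpow_add hμ0]; simp
      _ ≤ μD ^ q * (μD⁻¹ * Iq) := this
      _ = (μD ^ q * μD ^ (-1:ℝ)) * Iq := by rw [Real.rpow_neg_one]; ring
      _ = μD ^ (q - 1) * Iq := by rw [← Real.rpow_add hμ0]; ring_nf
  -- the δ-term is nonneg
  have hIn0 : 0 ≤ ∫ y in D, φ y ^ n :=
    setIntegral_nonneg hDmeas fun y hy => Real.rpow_nonneg (hφ_bds y hy).1 n
  have hδterm : 0 ≤ δ * exp ((m + n - 1) * η * r) * b ^ (m + n) * φ x ^ m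
      * (∫ y in D, φ y ^ n) := by positivity
  -- main inequality
  have hE10 : (0:ℝ) < exp ((q - 1) * η * r) := exp_pos _
  have hE30 : (0:ℝ) < exp (η * (m + n - 1) * Bstar) := exp_pos _
  have hbp0 : (0:ℝ) < b ^ p := Real.rpow_pos_of_pos hb0 p
  have hK0 : 0 ≤ k * C₁ ^ p + lam1 * C₁ := by
    have : 0 ≤ C₁ ^ p := Real.rpow_nonneg hC0 p
    positivity
  have hrabs := abs_le.mp hr
  -- b^(q-p) ≥ K * μD^(q-1) * E3
  have hcond' : (k * C₁ ^ p + lam1 * C₁) * μD ^ (q - 1) * exp (η * (m + n - 1) * Bstar)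
      ≤ b ^ (q - p) := by
    have hEprod : exp (-(η * (m + n - 1) * Bstar)) * exp (η * (m + n - 1) * Bstar) = 1 := by
      rw [← Real.exp_add]; simp
    have h := mul_le_mul_of_nonneg_right hcond hE30.le
    rwa [mul_assoc (b ^ (q - p)), hEprod, mul_one] at h
  -- E1 * E3 ≥ exp((p-1)ηr) and E1 * E3 ≥ 1
  have hEE : exp ((q - 1) * η * r) * exp (η * (m + n - 1) * Bstar)
      = exp ((q - 1) * η * r + η * (m + n - 1) * Bstar) := (Real.exp_add _ _).symm
  have hEp : exp ((p - 1) * η * r) ≤ exp ((q - 1) * η * r + η * (m + n - 1) * Bstar) := by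
    apply Real.exp_le_exp.mpr
    nlinarith [mul_nonneg hη (mul_nonneg (by linarith : (0:ℝ) ≤ q - p) (by linarith : 0 ≤ Bstar + r)),
      mul_nonneg hη (mul_nonneg (by linarith : (0:ℝ) ≤ m + n - 1 - (q - p)) hBstar)]
  have hE1 : (1:ℝ) ≤ exp ((q - 1) * η * r + η * (m + n - 1) * Bstar) := by
    apply Real.one_le_exp
    nlinarith [mul_nonneg hη (mul_nonneg (by linarith : (0:ℝ) ≤ q - 1) (by linarith : 0 ≤ Bstar + r)),
      mul_nonneg hη (mul_nonneg (by linarith : (0:ℝ) ≤ m + n - q) hBstar)]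
  -- chain
  have hbq : b ^ q = b ^ p * b ^ (q - p) := by
    rw [← Real.rpow_add hb0]; ring_nf
  have hbp : b ≤ b ^ p := by
    calc b = b ^ (1:ℝ) := (Real.rpow_one b).symm
      _ ≤ b ^ p := Real.rpow_le_rpow_left_iff hb |>.mpr hp.le
  have hφp : φ x ^ p ≤ C₁ ^ p := Real.rpow_le_rpow hφ0 hφC (by linarith)
  have hmain : k * exp ((p - 1) * η * r) * b ^ p * φ x ^ p + lam1 * b * φ x
      ≤ exp ((q - 1) * η * r) * b ^ q * Iq := by
    have step1 : exp ((q - 1) * η * r) * b ^ p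
          * ((k * C₁ ^ p + lam1 * C₁) * μD ^ (q - 1) * exp (η * (m + n - 1) * Bstar)) * Iq
        ≤ exp ((q - 1) * η * r) * b ^ q * Iq := by
      have h1 := mul_le_mul_of_nonneg_left hcond' (mul_nonneg hE10.le hbp0.le)
      have h2 := mul_le_mul_of_nonneg_right h1 hIq0
      calc exp ((q - 1) * η * r) * b ^ p
            * ((k * C₁ ^ p + lam1 * C₁) * μD ^ (q - 1) * exp (η * (m + n - 1) * Bstar)) * Iq
          = exp ((q - 1) * η * r) * b ^ p
            * ((k * C₁ ^ p + lam1 * C₁) * μD ^ (q - 1) * exp (η * (m + n - 1) * Bstar)) * Iq := rfl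
        _ ≤ exp ((q - 1) * η * r) * b ^ p * b ^ (q - p) * Iq := h2
        _ = exp ((q - 1) * η * r) * b ^ q * Iq := by rw [hbq]; ring
    have step2 : exp ((q - 1) * η * r) * b ^ p * ((k * C₁ ^ p + lam1 * C₁)
          * exp (η * (m + n - 1) * Bstar))
        ≤ exp ((q - 1) * η * r) * b ^ p
          * ((k * C₁ ^ p + lam1 * C₁) * μD ^ (q - 1) * exp (η * (m + n - 1) * Bstar)) * Iq := by
      have h0 : 0 ≤ exp ((q - 1) * η * r) * b ^ p * ((k * C₁ ^ p + lam1 * C₁)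
          * exp (η * (m + n - 1) * Bstar)) := by positivity
      calc exp ((q - 1) * η * r) * b ^ p * ((k * C₁ ^ p + lam1 * C₁)
            * exp (η * (m + n - 1) * Bstar))
          ≤ exp ((q - 1) * η * r) * b ^ p * ((k * C₁ ^ p + lam1 * C₁)
            * exp (η * (m + n - 1) * Bstar)) * (μD ^ (q - 1) * Iq) := le_mul_of_one_le_right h0 hJ
        _ = exp ((q - 1) * η * r) * b ^ p * ((k * C₁ ^ p + lam1 * C₁)
            * μD ^ (q - 1) * exp (η * (m + n - 1) * Bstar)) * Iq := by ring
    have step3 : k * exp ((p - 1) * η * r) * b ^ p * φ x ^ p + lam1 * b * φ x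
        ≤ exp ((q - 1) * η * r) * b ^ p * ((k * C₁ ^ p + lam1 * C₁)
          * exp (η * (m + n - 1) * Bstar)) := by
      have hrw : exp ((q - 1) * η * r) * b ^ p * ((k * C₁ ^ p + lam1 * C₁)
            * exp (η * (m + n - 1) * Bstar))
          = k * (exp ((q - 1) * η * r + η * (m + n - 1) * Bstar)) * b ^ p * C₁ ^ p
            + lam1 * (exp ((q - 1) * η * r + η * (m + n - 1) * Bstar)) * b ^ p * C₁ := by
        rw [← hEE]; ring
      rw [hrw]
      have hA : k * exp ((p - 1) * η * r) * b ^ p * φ x ^ p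
          ≤ k * (exp ((q - 1) * η * r + η * (m + n - 1) * Bstar)) * b ^ p * C₁ ^ p := by
        have h1 : exp ((p - 1) * η * r) * φ x ^ p
            ≤ (exp ((q - 1) * η * r + η * (m + n - 1) * Bstar)) * C₁ ^ p :=
          mul_le_mul hEp hφp (Real.rpow_nonneg hφ0 p) (exp_pos _).le
        calc k * exp ((p - 1) * η * r) * b ^ p * φ x ^ p
            = (k * b ^ p) * (exp ((p - 1) * η * r) * φ x ^ p) := by ring
          _ ≤ (k * b ^ p) * ((exp ((q - 1) * η * r + η * (m + n - 1) * Bstar)) * C₁ ^ p) :=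
              mul_le_mul_of_nonneg_left h1 (mul_nonneg hk.le hbp0.le)
          _ = k * (exp ((q - 1) * η * r + η * (m + n - 1) * Bstar)) * b ^ p * C₁ ^ p := by ring
      have hB : lam1 * b * φ x
          ≤ lam1 * (exp ((q - 1) * η * r + η * (m + n - 1) * Bstar)) * b ^ p * C₁ := by
        have h1 : b * φ x ≤ b ^ p * C₁ := mul_le_mul hbp hφC hφ0 hbp0.le
        have h2 : b ^ p * C₁ ≤ (exp ((q - 1) * η * r + η * (m + n - 1) * Bstar)) * (b ^ p * C₁) :=
          le_mul_of_one_le_left (mul_nonneg hbp0.le hC0) hE1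
        calc lam1 * b * φ x = lam1 * (b * φ x) := by ring
          _ ≤ lam1 * ((exp ((q - 1) * η * r + η * (m + n - 1) * Bstar)) * (b ^ p * C₁)) :=
              mul_le_mul_of_nonneg_left (h1.trans h2) hlam.le
          _ = lam1 * (exp ((q - 1) * η * r + η * (m + n - 1) * Bstar)) * b ^ p * C₁ := by ring
      linarith
    linarith
  linarith
end

section
/- Let D ⊂ ℝ^d be a measurable set with Lebesgue measure |D| satisfying 0 < |D| < ∞. Let k > 0, δ ≥ 0, η ≥ 0 be constants, let q > p > 1 and n > 1 be exponents, and let m satisfy m = 0 or m ≥ 1. Let φ : D → [0,∞) be measurable with ∫_D φ(y) dy = 1 and with φ^{q/(q−p)}, φ^{n/(n−1)}, and φ^{p+1} integrable on D. Let B* ≥ 0 and b > 1 satisfy b^{q−p}·e^{−η(q−1)B*} ≥ 2k·(∫_D φ(y)^{q/(q−p)} dy)^{(q−p)/p} / (∫_D φ(y)^{p+1} dy)^{(q−p)/p}. Let v : D → [0,∞) be measurable with v(x) ≥ b·φ(x) for all x ∈ D, and with v^q, v^n, v^p·φ, v^m·φ, and v·φ integrable on D. Then for every r ∈ ℝ with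 |r| ≤ B*: e^{(q−1)ηr}·∫_D v(y)^q dy − k·e^{(p−1)ηr}·∫_D v(x)^p·φ(x) dx + δ·e^{(m+n−1)ηr}·(∫_D v(z)^m·φ(z) dz)·(∫_D v(y)^n dy) ≥ (1/2)·e^{(q−1)ηr}·(∫_D φ(x)^{q/(q−p)} dx)^{(p−q)/p}·(∫_D v(x)·φ(x) dx)^q + δ·e^{(m+n−1)ηr}·(∫_D φ(x)^{n/(n−1)} dx)^{1−n}·(∫_D v(x)·φ(x) dx)^{m+n}. -/
open MeasureTheory Real Set

private lemma conj_aux {x : ℝ} (hx : 1 < x) : x.HolderConjugate (x / (x - 1)) := by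
  have hx0 : x ≠ 0 := by intro h; rw [h] at hx; norm_num at hx
  have hx1 : x - 1 ≠ 0 := ne_of_gt (show x - 1 > 0 by linarith)
  refine Real.holderConjugate_iff.mpr ⟨hx, ?_⟩
  field_simp
  ring

private lemma holder_aux {α : Type*} [MeasurableSpace α] {μ : Measure α} {a a' : ℝ}
    (hconj : a.HolderConjugate a')
    {f g : α → ℝ} (hfm : AEStronglyMeasurable f μ) (hgm : AEStronglyMeasurable g μ)
    (hf_nn : 0 ≤ᵐ[μ] f) (hg_nn : 0 ≤ᵐ[μ] g)
    (hf : Integrable (fun x => f x ^ a) μ) (hg : Integrable (fun x => g x ^ a') μ) :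
    ∫ x, f x * g x ∂μ ≤ (∫ x, f x ^ a ∂μ) ^ (1/a) * (∫ x, g x ^ a' ∂μ) ^ (1/a') := by
  have key : ∀ (s : ℝ) (h : α → ℝ), 1 < s → AEStronglyMeasurable h μ → 0 ≤ᵐ[μ] h →
      Integrable (fun x => h x ^ s) μ → MemLp h (ENNReal.ofReal s) μ := by
    intro s h hs hm hnn hint
    have hs0 : (0:ℝ) < s := lt_trans zero_lt_one hs
    have h1 : ENNReal.ofReal s ≠ 0 := by
      simp only [ne_eq, ENNReal.ofReal_eq_zero, not_le]; exact hs0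
    have h2 : ENNReal.ofReal s ≠ ⊤ := ENNReal.ofReal_ne_top
    refine (memLp_norm_rpow_iff (p := ENNReal.ofReal s) hm h1 h2).mp ?_
    rw [ENNReal.div_self h1 h2, memLp_one_iff_integrable]
    refine hint.congr ?_
    filter_upwards [hnn] with x hx
    rw [Real.norm_of_nonneg hx, ENNReal.toReal_ofReal hs0.le]
  exact integral_mul_le_Lp_mul_Lq_of_nonneg hconj hf_nn hg_nn
    (key a f hconj.lt hfm hf_nn hf) (key a' g hconj.symm.lt hgm hg_nn hg)

set_option maxHeartbeats 1000000 in
/-- The integral inequality (via Hölder's and Jensen's inequalities) converting the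
identity for `J'(t)` into the differential inequality for
`J(t) = ∫_D v(t,x)φ(x)dx`, under the third condition of (B1). -/
theorem statement10 {d : ℕ} (D : Set (EuclideanSpace ℝ (Fin d)))
    (hDmeas : MeasurableSet D) (hD0 : 0 < volume D) (hDfin : volume D < ⊤)
    (k δ η : ℝ) (hk : 0 < k) (hδ : 0 ≤ δ) (hη : 0 ≤ η)
    (p q n m : ℝ) (hp : 1 < p) (hpq : p < q) (hn : 1 < n) (hm : m = 0 ∨ 1 ≤ m)
    (φ : EuclideanSpace ℝ (Fin d) → ℝ) (hφmeas : Measurable φ)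
    (hφnn : ∀ x ∈ D, 0 ≤ φ x)
    (hφ_int : (∫ y in D, φ y) = 1)
    (hφ1 : IntegrableOn (fun y => φ y ^ (q / (q - p))) D)
    (hφ2 : IntegrableOn (fun y => φ y ^ (n / (n - 1))) D)
    (hφ3 : IntegrableOn (fun y => φ y ^ (p + 1)) D)
    (Bstar b : ℝ) (hBstar : 0 ≤ Bstar) (hb : 1 < b)
    -- the third condition of (B1)
    (hcond : 2 * k * (∫ y in D, φ y ^ (q / (q - p))) ^ ((q - p) / p)
        / (∫ y in D, φ y ^ (p + 1)) ^ ((q - p) / p)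
      ≤ b ^ (q - p) * exp (-(η * (q - 1) * Bstar)))
    (v : EuclideanSpace ℝ (Fin d) → ℝ) (hvmeas : Measurable v)
    (hv_lb : ∀ x ∈ D, b * φ x ≤ v x)
    (hv1 : IntegrableOn (fun y => v y ^ q) D)
    (hv2 : IntegrableOn (fun y => v y ^ n) D)
    (hv3 : IntegrableOn (fun x => v x ^ p * φ x) D)
    (hv4 : IntegrableOn (fun x => v x ^ m * φ x) D)
    (hv5 : IntegrableOn (fun x => v x * φ x) D) :
    ∀ r : ℝ, |r| ≤ Bstar →
      (1 / 2) * exp ((q - 1) * η * r)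
          * (∫ x in D, φ x ^ (q / (q - p))) ^ ((p - q) / p)
          * (∫ x in D, v x * φ x) ^ q
        + δ * exp ((m + n - 1) * η * r)
          * (∫ x in D, φ x ^ (n / (n - 1))) ^ (1 - n)
          * (∫ x in D, v x * φ x) ^ (m + n)
      ≤ exp ((q - 1) * η * r) * (∫ y in D, v y ^ q)
        - k * exp ((p - 1) * η * r) * (∫ x in D, v x ^ p * φ x)
        + δ * exp ((m + n - 1) * η * r) * (∫ z in D, v z ^ m * φ z)
            * (∫ y in D, v y ^ n) := by
  intro r hr
  have hp0 : (0:ℝ) < p := by linarith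
  have hq0 : (0:ℝ) < q := by linarith
  have hqp0 : (0:ℝ) < q - p := by linarith
  have hn0 : (0:ℝ) < n := by linarith
  have hb0 : (0:ℝ) < b := by linarith
  have hm0 : (0:ℝ) ≤ m := by
    rcases hm with rfl | h
    · exact le_refl 0
    · linarith
  have vnn : ∀ x ∈ D, 0 ≤ v x := fun x hx =>
    le_trans (mul_nonneg hb0.le (hφnn x hx)) (hv_lb x hx)
  have aeD : ∀ (P : EuclideanSpace ℝ (Fin d) → Prop), (∀ x ∈ D, P x) →
      ∀ᵐ x ∂(volume.restrict D), P x := fun P h =>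
    (ae_restrict_iff' hDmeas).mpr (ae_of_all _ h)
  -- φ is integrable on D
  have hφint : IntegrableOn φ D := by
    have hconst : IntegrableOn (fun _ => (1:ℝ)) D := integrableOn_const hDfin.ne
    refine Integrable.mono' (hconst.add hφ3) hφmeas.aestronglyMeasurable ?_
    refine aeD _ ?_
    intro x hx
    have hφx := hφnn x hx
    rw [Real.norm_of_nonneg hφx]
    rcases le_or_gt (φ x) 1 with h | h
    · have : 0 ≤ φ x ^ (p+1) := Real.rpow_nonneg hφx _
      simp only [Pi.add_apply]; linarith
    · have h2 : φ x ^ (1:ℝ) ≤ φ x ^ (p+1) :=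
        Real.rpow_le_rpow_of_exponent_le h.le (by linarith)
      rw [Real.rpow_one] at h2
      simp only [Pi.add_apply]; linarith
  -- positivity of integrals of powers of φ
  have intpos : ∀ a : ℝ, 1 < a → IntegrableOn (fun y => φ y ^ a) D →
      0 < ∫ y in D, φ y ^ a := by
    intro a ha hint
    have ha0 : (0:ℝ) < a := by linarith
    have hnn : 0 ≤ ∫ y in D, φ y ^ a :=
      setIntegral_nonneg hDmeas fun x hx => Real.rpow_nonneg (hφnn x hx) a
    rcases hnn.lt_or_eq with h | h
    · exact h
    · exfalso
      have hone : Integrable (fun _ => (1:ℝ) ^ (a/(a-1))) (volume.restrict D) := by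
        simp only [Real.one_rpow]
        exact integrableOn_const hDfin.ne
      have key : (∫ x in D, φ x * (1:ℝ)) ≤ (∫ x in D, φ x ^ a) ^ (1/a)
          * (∫ x in D, (1:ℝ) ^ (a/(a-1))) ^ (1/(a/(a-1))) :=
        holder_aux (conj_aux ha) hφmeas.aestronglyMeasurable aestronglyMeasurable_const
          (aeD _ hφnn) (ae_of_all _ fun _ => zero_le_one) hint hone
      rw [← h] at key
      simp only [mul_one, hφ_int, Real.zero_rpow (by positivity : (1:ℝ)/a ≠ 0),
        zero_mul] at key
      linarith
  have hApos : 0 < ∫ x in D, φ x ^ (q/(q-p)) :=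
    intpos _ ((one_lt_div hqp0).mpr (by linarith)) hφ1
  have hCpos : 0 < ∫ x in D, φ x ^ (n/(n-1)) :=
    intpos _ ((one_lt_div (by linarith : (0:ℝ) < n - 1)).mpr (by linarith)) hφ2
  have hP1pos : 0 < ∫ y in D, φ y ^ (p+1) := intpos _ (by linarith) hφ3
  have hJnn : 0 ≤ ∫ x in D, v x * φ x :=
    setIntegral_nonneg hDmeas fun x hx => mul_nonneg (vnn x hx) (hφnn x hx)
  have hQnn : 0 ≤ ∫ y in D, v y ^ q :=
    setIntegral_nonneg hDmeas fun x hx => Real.rpow_nonneg (vnn x hx) q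
  have hNnn : 0 ≤ ∫ y in D, v y ^ n :=
    setIntegral_nonneg hDmeas fun x hx => Real.rpow_nonneg (vnn x hx) n
  have hMnn : 0 ≤ ∫ z in D, v z ^ m * φ z :=
    setIntegral_nonneg hDmeas fun x hx =>
      mul_nonneg (Real.rpow_nonneg (vnn x hx) m) (hφnn x hx)
  -- Jensen-type inequality via Hölder
  have jensen : ∀ s : ℝ, 1 < s → IntegrableOn (fun x => v x ^ s * φ x) D →
      (∫ x in D, v x * φ x) ^ s ≤ ∫ x in D, v x ^ s * φ x := by
    intro s hs hint
    have hs0 : (0:ℝ) < s := by linarith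
    have hs1 : (0:ℝ) < s - 1 := by linarith
    have hs'0 : (0:ℝ) < s/(s-1) := div_pos hs0 hs1
    have hconj := conj_aux hs
    have hsum : 1/s + 1/(s/(s-1)) = 1 := by
      rw [one_div, one_div]; exact hconj.inv_add_inv_eq_one
    have hfm : AEStronglyMeasurable (fun x => v x * φ x ^ (1/s)) (volume.restrict D) :=
      (hvmeas.mul (by fun_prop : Measurable fun x => φ x ^ (1/s))).aestronglyMeasurable
    have hgm : AEStronglyMeasurable (fun x => φ x ^ (1/(s/(s-1)))) (volume.restrict D) :=
      (by fun_prop : Measurable fun x => φ x ^ (1/(s/(s-1)))).aestronglyMeasurable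
    have hfnn : ∀ x ∈ D, 0 ≤ v x * φ x ^ (1/s) := fun x hx =>
      mul_nonneg (vnn x hx) (Real.rpow_nonneg (hφnn x hx) _)
    have hgnn : ∀ x ∈ D, 0 ≤ φ x ^ (1/(s/(s-1))) := fun x hx =>
      Real.rpow_nonneg (hφnn x hx) _
    have heqf : ∀ x ∈ D, (v x * φ x ^ (1/s)) ^ s = v x ^ s * φ x := by
      intro x hx
      rw [Real.mul_rpow (vnn x hx) (Real.rpow_nonneg (hφnn x hx) _),
        ← Real.rpow_mul (hφnn x hx), one_div_mul_cancel hs0.ne', Real.rpow_one]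
    have heqg : ∀ x ∈ D, (φ x ^ (1/(s/(s-1)))) ^ (s/(s-1)) = φ x := by
      intro x hx
      rw [← Real.rpow_mul (hφnn x hx), one_div_mul_cancel hs'0.ne', Real.rpow_one]
    have heqfg : ∀ x ∈ D, (v x * φ x ^ (1/s)) * φ x ^ (1/(s/(s-1))) = v x * φ x := by
      intro x hx
      rw [mul_assoc, ← Real.rpow_add' (hφnn x hx) (by rw [hsum]; norm_num), hsum,
        Real.rpow_one]
    have hf : Integrable (fun x => (v x * φ x ^ (1/s)) ^ s) (volume.restrict D) :=
      hint.congr (aeD _ fun x hx => (heqf x hx).symm)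
    have hg : Integrable (fun x => ((φ x ^ (1/(s/(s-1)))) ^ (s/(s-1)))) (volume.restrict D) :=
      hφint.congr (aeD _ fun x hx => (heqg x hx).symm)
    have key : (∫ x in D, (v x * φ x ^ (1/s)) * φ x ^ (1/(s/(s-1))))
        ≤ (∫ x in D, (v x * φ x ^ (1/s)) ^ s) ^ (1/s)
          * (∫ x in D, (φ x ^ (1/(s/(s-1)))) ^ (s/(s-1))) ^ (1/(s/(s-1))) :=
      holder_aux hconj hfm hgm (aeD _ hfnn) (aeD _ hgnn) hf hg
    have e1 : (∫ x in D, (v x * φ x ^ (1/s)) * φ x ^ (1/(s/(s-1))))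
        = ∫ x in D, v x * φ x := setIntegral_congr_fun hDmeas fun x hx => heqfg x hx
    have e2 : (∫ x in D, (v x * φ x ^ (1/s)) ^ s) = ∫ x in D, v x ^ s * φ x :=
      setIntegral_congr_fun hDmeas fun x hx => heqf x hx
    have e3 : (∫ x in D, (φ x ^ (1/(s/(s-1)))) ^ (s/(s-1))) = ∫ x in D, φ x :=
      setIntegral_congr_fun hDmeas fun x hx => heqg x hx
    rw [e1, e2, e3, hφ_int, Real.one_rpow, mul_one] at key
    have hY : 0 ≤ ∫ x in D, v x ^ s * φ x :=
      setIntegral_nonneg hDmeas fun x hx =>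
        mul_nonneg (Real.rpow_nonneg (vnn x hx) _) (hφnn x hx)
    calc (∫ x in D, v x * φ x) ^ s ≤ ((∫ x in D, v x ^ s * φ x) ^ (1/s)) ^ s :=
          Real.rpow_le_rpow hJnn key hs0.le
      _ = ∫ x in D, v x ^ s * φ x := by
          rw [← Real.rpow_mul hY, one_div_mul_cancel hs0.ne', Real.rpow_one]
  have F2 : (∫ x in D, v x * φ x) ^ p ≤ ∫ x in D, v x ^ p * φ x := jensen p hp hv3
  have F4 : (∫ x in D, v x * φ x) ^ m ≤ ∫ z in D, v z ^ m * φ z := by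
    rcases hm with rfl | hm1
    · simp only [Real.rpow_zero, one_mul, hφ_int]
      exact le_refl 1
    · rcases eq_or_lt_of_le hm1 with rfl | hm2
      · have e : (∫ z in D, v z ^ (1:ℝ) * φ z) = ∫ z in D, v z * φ z :=
          setIntegral_congr_fun hDmeas fun x hx => by rw [Real.rpow_one]
        rw [Real.rpow_one, e]
      · exact jensen m hm2 hv4
  -- Hölder: ∫ v^p φ ≤ (∫ v^q)^(p/q) * A^((q-p)/q)
  have pointeq1 : ∀ x ∈ D, (v x ^ p) ^ (q/p) = v x ^ q := by
    intro x hx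
    rw [← Real.rpow_mul (vnn x hx)]
    congr 1
    field_simp
  have hconj1 : (q/p).HolderConjugate (q/(q-p)) := by
    refine Real.holderConjugate_iff.mpr ⟨(one_lt_div hp0).mpr hpq, ?_⟩
    rw [inv_div, inv_div, ← add_div, div_eq_one_iff_eq hq0.ne']
    ring
  have hfint1 : Integrable (fun x => (v x ^ p) ^ (q/p)) (volume.restrict D) :=
    hv1.congr (aeD _ fun x hx => (pointeq1 x hx).symm)
  have key1 : (∫ x in D, (v x ^ p) * φ x) ≤ (∫ x in D, (v x ^ p) ^ (q/p)) ^ (1/(q/p))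
      * (∫ x in D, φ x ^ (q/(q-p))) ^ (1/(q/(q-p))) :=
    holder_aux hconj1 ((by fun_prop : Measurable fun x => v x ^ p).aestronglyMeasurable)
      hφmeas.aestronglyMeasurable (aeD _ fun x hx => Real.rpow_nonneg (vnn x hx) p)
      (aeD _ hφnn) hfint1 hφ1
  have e4 : (∫ x in D, (v x ^ p) ^ (q/p)) = ∫ y in D, v y ^ q :=
    setIntegral_congr_fun hDmeas fun x hx => pointeq1 x hx
  rw [e4, one_div_div, one_div_div] at key1
  -- key1 : X ≤ Q^(p/q) * A^((q-p)/q)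
  -- Hölder: J ≤ N^(1/n) * C^((n-1)/n)
  have key3 : (∫ x in D, v x * φ x) ≤ (∫ x in D, v x ^ n) ^ (1/n)
      * (∫ x in D, φ x ^ (n/(n-1))) ^ (1/(n/(n-1))) :=
    holder_aux (conj_aux hn) hvmeas.aestronglyMeasurable hφmeas.aestronglyMeasurable
      (aeD _ vnn) (aeD _ hφnn) hv2 hφ2
  rw [one_div_div] at key3
  have F3 : (∫ x in D, v x * φ x) ^ n
      ≤ (∫ x in D, v x ^ n) * (∫ x in D, φ x ^ (n/(n-1))) ^ (n-1) := by
    calc (∫ x in D, v x * φ x) ^ n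
        ≤ ((∫ x in D, v x ^ n) ^ (1/n) * (∫ x in D, φ x ^ (n/(n-1))) ^ ((n-1)/n)) ^ n :=
          Real.rpow_le_rpow hJnn key3 hn0.le
      _ = (∫ x in D, v x ^ n) * (∫ x in D, φ x ^ (n/(n-1))) ^ (n-1) := by
          rw [Real.mul_rpow (Real.rpow_nonneg hNnn _) (Real.rpow_nonneg hCpos.le _),
            ← Real.rpow_mul hNnn, ← Real.rpow_mul hCpos.le,
            one_div_mul_cancel hn0.ne', div_mul_cancel₀ _ hn0.ne', Real.rpow_one]
  -- lower bound on X = ∫ v^p φ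
  have L2 : b ^ p * (∫ y in D, φ y ^ (p+1)) ≤ ∫ x in D, v x ^ p * φ x := by
    have hpt : ∀ x ∈ D, b ^ p * φ x ^ (p+1) ≤ v x ^ p * φ x := by
      intro x hx
      have hφx := hφnn x hx
      have h1 : φ x ^ (p+1) = φ x ^ p * φ x := by
        rw [Real.rpow_add' hφx (by positivity : p + 1 ≠ 0), Real.rpow_one]
      rw [h1, ← mul_assoc]
      refine mul_le_mul_of_nonneg_right ?_ hφx
      rw [← Real.mul_rpow hb0.le hφx]
      exact Real.rpow_le_rpow (mul_nonneg hb0.le hφx) (hv_lb x hx) hp0.le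
    calc b ^ p * ∫ y in D, φ y ^ (p+1) = ∫ y in D, b ^ p * φ y ^ (p+1) :=
          (integral_const_mul _ _).symm
      _ ≤ ∫ x in D, v x ^ p * φ x := setIntegral_mono_on (hφ3.const_mul _) hv3 hDmeas hpt
  have hXpos : 0 < ∫ x in D, v x ^ p * φ x :=
    lt_of_lt_of_le (mul_pos (Real.rpow_pos_of_pos hb0 p) hP1pos) L2
  -- F5 : 2k A^((q-p)/p) ≤ exp((q-p)ηr) * X^((q-p)/p)
  have hbP : (b ^ p * (∫ y in D, φ y ^ (p+1))) ^ ((q-p)/p)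
      = b ^ (q-p) * (∫ y in D, φ y ^ (p+1)) ^ ((q-p)/p) := by
    rw [Real.mul_rpow (Real.rpow_nonneg hb0.le _) hP1pos.le, ← Real.rpow_mul hb0.le,
      show p * ((q-p)/p) = q - p by field_simp]
  have hXq1 : (b ^ p * (∫ y in D, φ y ^ (p+1))) ^ ((q-p)/p)
      ≤ (∫ x in D, v x ^ p * φ x) ^ ((q-p)/p) :=
    Real.rpow_le_rpow (mul_nonneg (Real.rpow_nonneg hb0.le _) hP1pos.le) L2
      (by positivity)
  have hcond' : 2*k*(∫ x in D, φ x ^ (q/(q-p))) ^ ((q-p)/p)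
      ≤ b ^ (q-p) * exp (-(η*(q-1)*Bstar)) * (∫ y in D, φ y ^ (p+1)) ^ ((q-p)/p) :=
    (div_le_iff₀ (Real.rpow_pos_of_pos hP1pos _)).mp hcond
  have F5 : 2*k*(∫ x in D, φ x ^ (q/(q-p))) ^ ((q-p)/p)
      ≤ exp ((q-p)*η*r) * (∫ x in D, v x ^ p * φ x) ^ ((q-p)/p) := by
    have hexp : exp (-(η*(q-1)*Bstar)) ≤ exp ((q-p)*η*r) := by
      apply Real.exp_le_exp.mpr
      have hr1 := (abs_le.mp hr).1
      have f1 := mul_le_mul_of_nonneg_left hr1 (show (0:ℝ) ≤ (q-p)*η by positivity)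
      have f2 : (0:ℝ) ≤ η*Bstar*(p-1) :=
        mul_nonneg (mul_nonneg hη hBstar) (by linarith)
      nlinarith [f1, f2]
    calc 2*k*(∫ x in D, φ x ^ (q/(q-p))) ^ ((q-p)/p)
        ≤ b ^ (q-p) * exp (-(η*(q-1)*Bstar)) * (∫ y in D, φ y ^ (p+1)) ^ ((q-p)/p) :=
          hcond'
      _ = exp (-(η*(q-1)*Bstar)) * (b ^ (q-p) * (∫ y in D, φ y ^ (p+1)) ^ ((q-p)/p)) := by
          ring
      _ ≤ exp ((q-p)*η*r) * ((b ^ p * (∫ y in D, φ y ^ (p+1))) ^ ((q-p)/p)) := by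
          rw [hbP]
          exact mul_le_mul hexp le_rfl
            (mul_nonneg (Real.rpow_nonneg hb0.le _) (Real.rpow_nonneg hP1pos.le _))
            (Real.exp_pos _).le
      _ ≤ exp ((q-p)*η*r) * (∫ x in D, v x ^ p * φ x) ^ ((q-p)/p) :=
          mul_le_mul_of_nonneg_left hXq1 (Real.exp_pos _).le
  -- X^(q/p) ≤ Q * A^((q-p)/p)
  have hQX : (∫ x in D, v x ^ p * φ x) ^ (q/p)
      ≤ (∫ y in D, v y ^ q) * (∫ x in D, φ x ^ (q/(q-p))) ^ ((q-p)/p) := by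
    calc (∫ x in D, v x ^ p * φ x) ^ (q/p)
        ≤ ((∫ y in D, v y ^ q) ^ (p/q) * (∫ x in D, φ x ^ (q/(q-p))) ^ ((q-p)/q)) ^ (q/p) :=
          Real.rpow_le_rpow hXpos.le key1 (by positivity)
      _ = (∫ y in D, v y ^ q) * (∫ x in D, φ x ^ (q/(q-p))) ^ ((q-p)/p) := by
          rw [Real.mul_rpow (Real.rpow_nonneg hQnn _) (Real.rpow_nonneg hApos.le _),
            ← Real.rpow_mul hQnn, ← Real.rpow_mul hApos.le,
            show p/q*(q/p) = 1 by field_simp,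
            show (q-p)/q*(q/p) = (q-p)/p by field_simp, Real.rpow_one]
  have hJq : (∫ x in D, v x * φ x) ^ q ≤ (∫ x in D, v x ^ p * φ x) ^ (q/p) := by
    have e : (∫ x in D, v x * φ x) ^ q = ((∫ x in D, v x * φ x) ^ p) ^ (q/p) := by
      rw [← Real.rpow_mul hJnn, show p*(q/p) = q by field_simp]
    rw [e]
    exact Real.rpow_le_rpow (Real.rpow_nonneg hJnn p) F2 (by positivity)
  have G2 : (∫ x in D, φ x ^ (q/(q-p))) ^ ((p-q)/p) * (∫ x in D, v x * φ x) ^ q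
      ≤ ∫ y in D, v y ^ q := by
    have hA' : 0 < (∫ x in D, φ x ^ (q/(q-p))) ^ ((q-p)/p) :=
      Real.rpow_pos_of_pos hApos _
    have h1 := le_trans hJq hQX
    have h2 : (∫ x in D, φ x ^ (q/(q-p))) ^ ((p-q)/p)
        = ((∫ x in D, φ x ^ (q/(q-p))) ^ ((q-p)/p))⁻¹ := by
      rw [show (p-q)/p = -((q-p)/p) by ring, Real.rpow_neg hApos.le]
    rw [h2]
    calc ((∫ x in D, φ x ^ (q/(q-p))) ^ ((q-p)/p))⁻¹ * (∫ x in D, v x * φ x) ^ q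
        ≤ ((∫ x in D, φ x ^ (q/(q-p))) ^ ((q-p)/p))⁻¹
          * ((∫ y in D, v y ^ q) * (∫ x in D, φ x ^ (q/(q-p))) ^ ((q-p)/p)) :=
          mul_le_mul_of_nonneg_left h1 (inv_nonneg.mpr hA'.le)
      _ = ∫ y in D, v y ^ q := by
          rw [mul_comm (∫ y in D, v y ^ q), ← mul_assoc, inv_mul_cancel₀ hA'.ne', one_mul]
  have G1 : k * (∫ x in D, v x ^ p * φ x)
      ≤ 1/2 * exp ((q-p)*η*r) * (∫ y in D, v y ^ q) := by
    have hA' : 0 < (∫ x in D, φ x ^ (q/(q-p))) ^ ((q-p)/p) :=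
      Real.rpow_pos_of_pos hApos _
    have hpos2 : (0:ℝ) < 2*(∫ x in D, φ x ^ (q/(q-p))) ^ ((q-p)/p) := mul_pos two_pos hA'
    refine le_of_mul_le_mul_left ?_ hpos2
    have s1 := mul_le_mul_of_nonneg_right F5 hXpos.le
    have s2 : exp ((q-p)*η*r) * (∫ x in D, v x ^ p * φ x) ^ ((q-p)/p)
        * (∫ x in D, v x ^ p * φ x)
        = exp ((q-p)*η*r) * (∫ x in D, v x ^ p * φ x) ^ (q/p) := by
      rw [mul_assoc]
      congr 1
      rw [← Real.rpow_add_one hXpos.ne' ((q-p)/p)]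
      congr 1
      field_simp
      ring
    have s3 := mul_le_mul_of_nonneg_left hQX (Real.exp_pos ((q-p)*η*r)).le
    nlinarith [s1, s2, s3]
  have h2 : k * exp ((p-1)*η*r) * (∫ x in D, v x ^ p * φ x)
      ≤ 1/2 * exp ((q-1)*η*r) * (∫ y in D, v y ^ q) := by
    have e5 : exp ((p-1)*η*r) * exp ((q-p)*η*r) = exp ((q-1)*η*r) := by
      rw [← Real.exp_add]; congr 1; ring
    calc k * exp ((p-1)*η*r) * (∫ x in D, v x ^ p * φ x)
        = exp ((p-1)*η*r) * (k * (∫ x in D, v x ^ p * φ x)) := by ring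
      _ ≤ exp ((p-1)*η*r) * (1/2 * exp ((q-p)*η*r) * (∫ y in D, v y ^ q)) :=
          mul_le_mul_of_nonneg_left G1 (Real.exp_pos _).le
      _ = 1/2 * (exp ((p-1)*η*r) * exp ((q-p)*η*r)) * (∫ y in D, v y ^ q) := by ring
      _ = 1/2 * exp ((q-1)*η*r) * (∫ y in D, v y ^ q) := by rw [e5]
  -- part (i)
  have parti : 1/2 * exp ((q-1)*η*r) * (∫ x in D, φ x ^ (q/(q-p))) ^ ((p-q)/p)
      * (∫ x in D, v x * φ x) ^ q
      ≤ exp ((q-1)*η*r) * (∫ y in D, v y ^ q)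
        - k * exp ((p-1)*η*r) * (∫ x in D, v x ^ p * φ x) := by
    have hG2' := mul_le_mul_of_nonneg_left G2
      (show (0:ℝ) ≤ 1/2 * exp ((q-1)*η*r) by positivity)
    nlinarith [h2, hG2']
  -- part (ii)
  have h5 : (∫ x in D, φ x ^ (n/(n-1))) ^ (1-n) * (∫ x in D, v x * φ x) ^ n
      ≤ ∫ y in D, v y ^ n := by
    have hC' : 0 < (∫ x in D, φ x ^ (n/(n-1))) ^ (n-1) := Real.rpow_pos_of_pos hCpos _
    have h6 : (∫ x in D, φ x ^ (n/(n-1))) ^ (1-n)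
        = ((∫ x in D, φ x ^ (n/(n-1))) ^ (n-1))⁻¹ := by
      rw [show (1-n) = -(n-1) by ring, Real.rpow_neg hCpos.le]
    rw [h6]
    calc ((∫ x in D, φ x ^ (n/(n-1))) ^ (n-1))⁻¹ * (∫ x in D, v x * φ x) ^ n
        ≤ ((∫ x in D, φ x ^ (n/(n-1))) ^ (n-1))⁻¹
          * ((∫ x in D, v x ^ n) * (∫ x in D, φ x ^ (n/(n-1))) ^ (n-1)) :=
          mul_le_mul_of_nonneg_left F3 (inv_nonneg.mpr hC'.le)
      _ = ∫ x in D, v x ^ n := by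
          rw [mul_comm (∫ x in D, v x ^ n), ← mul_assoc, inv_mul_cancel₀ hC'.ne', one_mul]
  have partii_core : (∫ x in D, φ x ^ (n/(n-1))) ^ (1-n)
      * (∫ x in D, v x * φ x) ^ (m+n)
      ≤ (∫ z in D, v z ^ m * φ z) * (∫ y in D, v y ^ n) := by
    have hJmn : (∫ x in D, v x * φ x) ^ (m+n)
        = (∫ x in D, v x * φ x) ^ m * (∫ x in D, v x * φ x) ^ n :=
      Real.rpow_add' hJnn (ne_of_gt (show (0:ℝ) < m + n by linarith))
    rw [hJmn]
    calc (∫ x in D, φ x ^ (n/(n-1))) ^ (1-n)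
        * ((∫ x in D, v x * φ x) ^ m * (∫ x in D, v x * φ x) ^ n)
        = (∫ x in D, v x * φ x) ^ m
          * ((∫ x in D, φ x ^ (n/(n-1))) ^ (1-n) * (∫ x in D, v x * φ x) ^ n) := by
          ring
      _ ≤ (∫ z in D, v z ^ m * φ z) * (∫ y in D, v y ^ n) :=
          mul_le_mul F4 h5
            (mul_nonneg (Real.rpow_nonneg hCpos.le _) (Real.rpow_nonneg hJnn _)) hMnn
  have partii : δ * exp ((m+n-1)*η*r) * (∫ x in D, φ x ^ (n/(n-1))) ^ (1-n)
      * (∫ x in D, v x * φ x) ^ (m+n)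
      ≤ δ * exp ((m+n-1)*η*r) * (∫ z in D, v z ^ m * φ z) * (∫ y in D, v y ^ n) := by
    have := mul_le_mul_of_nonneg_left partii_core
      (show (0:ℝ) ≤ δ * exp ((m+n-1)*η*r) by positivity)
    nlinarith [this]
  linarith [parti, partii]
end
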